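/- arXiv:1708.05120 — 6 statements merged into one kernel-verified Lean document; each statement's English description precedes it below -/
import Mathlib

section
/- Let (P₁, P₂) be a Hermite bimatrix, i.e., P₁, P₂ ∈ ℂ^{n×n} with P₁ = P₁^H and P₂ = P₂^T. Then the following three statements are equivalent: (1) Re(x^H (P₁x + P₂^# x^#)) > 0 for every nonzero x ∈ ℂ^n; (2) the real symmetric matrix {P₁,P₂}_∘ ∈ ℝ^{2n×2n} is positive definite; (3) the Hermitian matrix {P₁,P₂}_⋄ ∈ ℂ^{2n×2n} is positive definite. The same equivalences hold with strict positivity replaced by nonnegativity (positive semidefiniteness) throughout. -/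
open Matrix
open scoped ComplexOrder

noncomputable section

/-- Entrywise complex conjugate of a matrix `M`, written `M^#` in the paper. -/
def mconj {n m : Type*} (A : Matrix n m ℂ) : Matrix n m ℂ := A.map (starRingEnd ℂ)

/-- The complex-lifting (doubled-up) matrix `{A₁,A₂}_⋄ = [[A₁, A₂^#], [A₂, A₁^#]]`. -/
def dlift {n m : Type*} (A₁ A₂ : Matrix n m ℂ) : Matrix (n ⊕ n) (m ⊕ m) ℂ :=
  Matrix.fromBlocks A₁ (mconj A₂) A₂ (mconj A₁)

/-- The real-representation matrix
`{A₁,A₂}_∘ = [[Re(A₁+A₂), −Im(A₁+A₂)], [Im(A₁−A₂), Re(A₁−A₂)]]`. -/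
def realRep {n m : Type*} (A₁ A₂ : Matrix n m ℂ) : Matrix (n ⊕ n) (m ⊕ m) ℝ :=
  Matrix.fromBlocks ((A₁ + A₂).map Complex.re) (-((A₁ + A₂).map Complex.im))
    ((A₁ - A₂).map Complex.im) ((A₁ - A₂).map Complex.re)

/-- The unitary matrix `H_n = (1/√2)·[[I, jI], [I, −jI]]`. -/
def Hmat (n : Type*) [DecidableEq n] : Matrix (n ⊕ n) (n ⊕ n) ℂ :=
  (Real.sqrt 2 : ℂ)⁻¹ • Matrix.fromBlocks 1 (Complex.I • 1) 1 (-(Complex.I • 1))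

/-- The swap matrix `E_n = [[0, I], [I, 0]]`. -/
def Emat (n : Type*) [DecidableEq n] : Matrix (n ⊕ n) (n ⊕ n) ℂ :=
  Matrix.fromBlocks 0 1 1 0

/-- The real vector `(Re x ; Im x)` associated with a complex vector `x`. -/
def vreal {m : Type*} (x : m → ℂ) : (m ⊕ m) → ℝ :=
  Sum.elim (fun i => (x i).re) (fun i => (x i).im)

variable {n : ℕ} (P₁ P₂ : Matrix (Fin n) (Fin n) ℂ)

lemma Qre_sum (x : Fin n → ℂ) :
    (star x ⬝ᵥ (P₁.mulVec x + (mconj P₂).mulVec (star x))).re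
      = ∑ i, ∑ j, ((star (x i) * P₁ i j * x j).re
          + (star (x i) * star (P₂ i j) * star (x j)).re) := by
  simp only [dotProduct, mulVec, Pi.add_apply, Pi.star_apply, mconj, Matrix.map_apply,
    mul_add, Finset.mul_sum, Complex.re_sum, Complex.add_re, Finset.sum_add_distrib,
    ← mul_assoc, starRingEnd_apply]
lemma quadR (y : Fin n ⊕ Fin n → ℝ) :
    y ⬝ᵥ (realRep P₁ P₂).mulVec y
      = (star (fun i => (⟨y (Sum.inl i), y (Sum.inr i)⟩ : ℂ)) ⬝ᵥ
          (P₁.mulVec (fun i => (⟨y (Sum.inl i), y (Sum.inr i)⟩ : ℂ))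
            + (mconj P₂).mulVec (star (fun i => (⟨y (Sum.inl i), y (Sum.inr i)⟩ : ℂ))))).re := by
  rw [Qre_sum]
  simp only [dotProduct, mulVec, Finset.mul_sum, Fintype.sum_sum_type, realRep,
    Matrix.fromBlocks_apply₁₁, Matrix.fromBlocks_apply₁₂, Matrix.fromBlocks_apply₂₁,
    Matrix.fromBlocks_apply₂₂, Matrix.map_apply, Matrix.neg_apply, Matrix.add_apply,
    Matrix.sub_apply, ← Finset.sum_add_distrib, ← mul_assoc]
  refine Finset.sum_congr rfl fun i _ => Finset.sum_congr rfl fun j _ => ?_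
  simp only [Pi.star_apply, Complex.star_def, Complex.mul_re, Complex.mul_im,
    Complex.conj_re, Complex.conj_im, Complex.add_re, Complex.add_im, Complex.sub_re,
    Complex.sub_im]
  ring
variable {n : ℕ} (P₁ P₂ : Matrix (Fin n) (Fin n) ℂ)

lemma sum_eq_of_sym {F : Type*} [Field F] [CharZero F] (L R : Fin n → Fin n → F)
    (h : ∀ i j, L i j + L j i = R i j + R j i) :
    ∑ i, ∑ j, L i j = ∑ i, ∑ j, R i j := by
  have h2 : (∑ i, ∑ j, L i j) + (∑ i, ∑ j, L i j)
      = (∑ i, ∑ j, R i j) + (∑ i, ∑ j, R i j) := by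
    conv_lhs => rw [show (∑ i, ∑ j, L i j) + (∑ i, ∑ j, L i j)
      = (∑ i, ∑ j, L i j) + (∑ j, ∑ i, L i j) from by rw [Finset.sum_comm]]
    conv_rhs => rw [show (∑ i, ∑ j, R i j) + (∑ i, ∑ j, R i j)
      = (∑ i, ∑ j, R i j) + (∑ j, ∑ i, R i j) from by rw [Finset.sum_comm]]
    simp only [← Finset.sum_add_distrib]
    exact Finset.sum_congr rfl fun i _ => Finset.sum_congr rfl fun j _ => h i j
  linear_combination h2 / 2

lemma sum_eq_zero_of_antisym {F : Type*} [Field F] [CharZero F] (L : Fin n → Fin n → F)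
    (h : ∀ i j, L i j + L j i = 0) :
    ∑ i, ∑ j, L i j = 0 := by
  have := sum_eq_of_sym L (fun _ _ => 0) (by simpa using h)
  simpa using this

lemma quadD (h₁ : P₁ = P₁ᴴ) (h₂ : P₂ = P₂ᵀ) (u v : Fin n → ℂ) :
    star (Sum.elim u v) ⬝ᵥ (dlift P₁ P₂).mulVec (Sum.elim u v)
      = ((((star (fun i => u i + star (v i)) ⬝ᵥ
              (P₁.mulVec (fun i => u i + star (v i))
                + (mconj P₂).mulVec (star (fun i => u i + star (v i))))).re
          + (star (fun i => Complex.I * (u i - star (v i))) ⬝ᵥ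
              (P₁.mulVec (fun i => Complex.I * (u i - star (v i)))
                + (mconj P₂).mulVec (star (fun i => Complex.I * (u i - star (v i)))))).re)
            / 2 : ℝ) : ℂ) := by
  have e1 : ∀ i j, P₁ j i = star (P₁ i j) := fun i j => by
    nth_rewrite 1 [h₁]; rw [Matrix.conjTranspose_apply]
  have e2 : ∀ i j, P₂ j i = P₂ i j := fun i j => by
    nth_rewrite 1 [h₂]; rw [Matrix.transpose_apply]
  apply Complex.ext
  · rw [Complex.ofReal_re, Qre_sum, Qre_sum]
    simp only [dotProduct, mulVec, Finset.mul_sum, Fintype.sum_sum_type, dlift, mconj,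
      Matrix.fromBlocks_apply₁₁, Matrix.fromBlocks_apply₁₂, Matrix.fromBlocks_apply₂₁,
      Matrix.fromBlocks_apply₂₂, Matrix.map_apply, Sum.elim_inl, Sum.elim_inr,
      Pi.star_apply, Complex.re_sum, Complex.add_re, add_div, Finset.sum_div,
      ← Finset.sum_add_distrib, ← mul_assoc]
    apply sum_eq_of_sym
    intro i j
    rw [e1 i j, e2 i j]
    simp only [RCLike.star_def, Complex.mul_re, Complex.mul_im, Complex.add_re,
      Complex.add_im, Complex.sub_re, Complex.sub_im, Complex.I_re, Complex.I_im,
      Complex.conj_re, Complex.conj_im, map_add, map_sub, _root_.map_mul, Complex.conj_conj,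
      Complex.conj_I, Complex.neg_re, Complex.neg_im]
    ring
  · rw [Complex.ofReal_im]
    simp only [dotProduct, mulVec, Finset.mul_sum, Fintype.sum_sum_type, dlift, mconj,
      Matrix.fromBlocks_apply₁₁, Matrix.fromBlocks_apply₁₂, Matrix.fromBlocks_apply₂₁,
      Matrix.fromBlocks_apply₂₂, Matrix.map_apply, Sum.elim_inl, Sum.elim_inr,
      Pi.star_apply, Complex.im_sum, Complex.add_im, ← Finset.sum_add_distrib, ← mul_assoc]
    apply sum_eq_zero_of_antisym
    intro i j
    rw [e1 i j, e2 i j]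
    simp only [RCLike.star_def, Complex.mul_re, Complex.mul_im, Complex.add_re,
      Complex.add_im, Complex.sub_re, Complex.sub_im, Complex.I_re, Complex.I_im,
      Complex.conj_re, Complex.conj_im, map_add, map_sub, _root_.map_mul, Complex.conj_conj,
      Complex.conj_I, Complex.neg_re, Complex.neg_im]
    ring
namespace Stmt5Aux

variable {n : ℕ} (P₁ P₂ : Matrix (Fin n) (Fin n) ℂ)

lemma quadD_diag (x : Fin n → ℂ) :
    star (Sum.elim x (star x)) ⬝ᵥ (dlift P₁ P₂).mulVec (Sum.elim x (star x))
      = ((2 * (star x ⬝ᵥ (P₁.mulVec x + (mconj P₂).mulVec (star x))).re : ℝ) : ℂ) := by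
  apply Complex.ext
  · rw [Complex.ofReal_re, Qre_sum, Finset.mul_sum]
    simp only [dotProduct, mulVec, Finset.mul_sum, Fintype.sum_sum_type, dlift, mconj,
      Matrix.fromBlocks_apply₁₁, Matrix.fromBlocks_apply₁₂, Matrix.fromBlocks_apply₂₁,
      Matrix.fromBlocks_apply₂₂, Matrix.map_apply, Sum.elim_inl, Sum.elim_inr,
      Pi.star_apply, Complex.re_sum, Complex.add_re, ← Finset.sum_add_distrib, ← mul_assoc]
    refine Finset.sum_congr rfl fun i _ => Finset.sum_congr rfl fun j _ => ?_
    simp only [RCLike.star_def, Complex.mul_re, Complex.mul_im,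
      Complex.conj_re, Complex.conj_im, Complex.conj_conj]
    simp only [Complex.add_re, Complex.add_im, Complex.mul_re, Complex.mul_im,
      Complex.conj_re, Complex.conj_im]
    ring
  · rw [Complex.ofReal_im]
    simp only [dotProduct, mulVec, Finset.mul_sum, Fintype.sum_sum_type, dlift, mconj,
      Matrix.fromBlocks_apply₁₁, Matrix.fromBlocks_apply₁₂, Matrix.fromBlocks_apply₂₁,
      Matrix.fromBlocks_apply₂₂, Matrix.map_apply, Sum.elim_inl, Sum.elim_inr,
      Pi.star_apply, Complex.im_sum, Complex.add_im, ← Finset.sum_add_distrib, ← mul_assoc]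
    refine Finset.sum_eq_zero fun i _ => Finset.sum_eq_zero fun j _ => ?_
    simp only [RCLike.star_def, Complex.mul_re, Complex.mul_im,
      Complex.conj_re, Complex.conj_im, Complex.conj_conj]
    simp only [Complex.add_re, Complex.add_im, Complex.mul_re, Complex.mul_im,
      Complex.conj_re, Complex.conj_im]
    ring

lemma hermR (h₁ : P₁ = P₁ᴴ) (h₂ : P₂ = P₂ᵀ) : (realRep P₁ P₂).IsHermitian := by
  have e1 : ∀ i j, P₁ j i = star (P₁ i j) := fun i j => by
    nth_rewrite 1 [h₁]; rw [Matrix.conjTranspose_apply]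
  have e2 : ∀ i j, P₂ j i = P₂ i j := fun i j => by
    nth_rewrite 1 [h₂]; rw [Matrix.transpose_apply]
  show _ = _
  ext k l
  rcases k with i | i <;> rcases l with j | j <;>
    simp [realRep, Matrix.conjTranspose_apply, e1 i j, e2 i j, Complex.add_re,
      Complex.add_im, Complex.sub_re, Complex.sub_im, RCLike.star_def] <;> ring

lemma hermD (h₁ : P₁ = P₁ᴴ) (h₂ : P₂ = P₂ᵀ) : (dlift P₁ P₂).IsHermitian := by
  have e1 : ∀ i j, P₁ j i = star (P₁ i j) := fun i j => by
    nth_rewrite 1 [h₁]; rw [Matrix.conjTranspose_apply]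
  have e2 : ∀ i j, P₂ j i = P₂ i j := fun i j => by
    nth_rewrite 1 [h₂]; rw [Matrix.transpose_apply]
  show _ = _
  ext k l
  rcases k with i | i <;> rcases l with j | j <;>
    simp [dlift, mconj, Matrix.conjTranspose_apply, e1 i j, e2 i j]

end Stmt5Aux
namespace Stmt5Aux

variable {n : ℕ} {P₁ P₂ : Matrix (Fin n) (Fin n) ℂ}

lemma cx_ne_zero {y : Fin n ⊕ Fin n → ℝ} (hy : y ≠ 0) :
    (fun i => (⟨y (Sum.inl i), y (Sum.inr i)⟩ : ℂ)) ≠ 0 := by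
  intro hc
  apply hy
  funext k
  have h : ∀ i, (⟨y (Sum.inl i), y (Sum.inr i)⟩ : ℂ) = 0 := fun i => congrFun hc i
  rcases k with i | i
  · have := h i
    rw [show (0:ℂ) = ⟨0,0⟩ from rfl, Complex.mk.injEq] at this
    exact this.1
  · have := h i
    rw [show (0:ℂ) = ⟨0,0⟩ from rfl, Complex.mk.injEq] at this
    exact this.2

lemma vreal_ne_zero {x : Fin n → ℂ} (hx : x ≠ 0) : vreal x ≠ 0 := by
  intro hc
  apply hx
  funext i
  have h1 : (x i).re = 0 := congrFun hc (Sum.inl i)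
  have h2 : (x i).im = 0 := congrFun hc (Sum.inr i)
  exact Complex.ext h1 h2

lemma cx_vreal (x : Fin n → ℂ) :
    (fun i => (⟨vreal x (Sum.inl i), vreal x (Sum.inr i)⟩ : ℂ)) = x :=
  funext fun i => Complex.eta (x i)

end Stmt5Aux
/-- for a Hermite bimatrix `(P₁,P₂)` (i.e. `P₁ = P₁ᴴ`, `P₂ = P₂ᵀ`),
positive definiteness of the quadratic form `x ↦ Re(xᴴ(P₁x + P₂^# x^#))`, of the real
representation `{P₁,P₂}_∘`, and of the complex lifting `{P₁,P₂}_⋄` are all equivalent,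
and likewise for positive semidefiniteness. -/
theorem stmt_5 (n : ℕ) (P₁ P₂ : Matrix (Fin n) (Fin n) ℂ)
    (h₁ : P₁ = P₁ᴴ) (h₂ : P₂ = P₂ᵀ) :
    ((∀ x : Fin n → ℂ, x ≠ 0 →
        0 < (star x ⬝ᵥ (P₁.mulVec x + (mconj P₂).mulVec (star x))).re) ↔
      (realRep P₁ P₂).PosDef) ∧
    ((realRep P₁ P₂).PosDef ↔ (dlift P₁ P₂).PosDef) ∧
    ((∀ x : Fin n → ℂ,
        0 ≤ (star x ⬝ᵥ (P₁.mulVec x + (mconj P₂).mulVec (star x))).re) ↔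
      (realRep P₁ P₂).PosSemidef) ∧
    ((realRep P₁ P₂).PosSemidef ↔ (dlift P₁ P₂).PosSemidef) := by
  have hnn : (∀ x : Fin n → ℂ, x ≠ 0 →
      0 < (star x ⬝ᵥ (P₁.mulVec x + (mconj P₂).mulVec (star x))).re) →
      ∀ x : Fin n → ℂ, 0 ≤ (star x ⬝ᵥ (P₁.mulVec x + (mconj P₂).mulVec (star x))).re := by
    intro h x
    by_cases hx : x = 0
    · subst hx; simp
    · exact (h x hx).le
  have iAB : (∀ x : Fin n → ℂ, x ≠ 0 →
      0 < (star x ⬝ᵥ (P₁.mulVec x + (mconj P₂).mulVec (star x))).re) ↔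
      (realRep P₁ P₂).PosDef := by
    constructor
    · intro hA
      refine Matrix.PosDef.of_dotProduct_mulVec_pos (Stmt5Aux.hermR P₁ P₂ h₁ h₂) fun y hy => ?_
      rw [star_trivial, quadR]
      exact hA _ (Stmt5Aux.cx_ne_zero hy)
    · intro hB x hx
      have := hB.dotProduct_mulVec_pos (x := vreal x) (Stmt5Aux.vreal_ne_zero hx)
      rw [star_trivial, quadR, Stmt5Aux.cx_vreal] at this
      exact this
  have iAC : (∀ x : Fin n → ℂ, x ≠ 0 →
      0 < (star x ⬝ᵥ (P₁.mulVec x + (mconj P₂).mulVec (star x))).re) ↔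
      (dlift P₁ P₂).PosDef := by
    constructor
    · intro hA
      refine Matrix.PosDef.of_dotProduct_mulVec_pos (Stmt5Aux.hermD P₁ P₂ h₁ h₂) fun z hz => ?_
      have hzz : z = Sum.elim (fun i => z (Sum.inl i)) (fun i => z (Sum.inr i)) := by
        funext k; cases k <;> rfl
      have hq := quadD P₁ P₂ h₁ h₂ (fun i => z (Sum.inl i)) (fun i => z (Sum.inr i))
      rw [← hzz] at hq
      rw [hq, Complex.zero_lt_real]
      have key : (fun i => z (Sum.inl i) + star (z (Sum.inr i))) ≠ 0 ∨
          (fun i => Complex.I * (z (Sum.inl i) - star (z (Sum.inr i)))) ≠ 0 := by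
        by_contra hcon
        push_neg at hcon
        obtain ⟨c1, c2⟩ := hcon
        apply hz
        funext k
        have a3 : ∀ i, z (Sum.inl i) - star (z (Sum.inr i)) = 0 := by
          intro i
          rcases mul_eq_zero.mp (congrFun c2 i) with h | h
          · exact absurd h Complex.I_ne_zero
          · exact h
        rcases k with i | i
        · have a1 : z (Sum.inl i) + star (z (Sum.inr i)) = 0 := congrFun c1 i
          show z (Sum.inl i) = 0
          linear_combination (a1 + a3 i) / 2
        · have a1 : z (Sum.inl i) + star (z (Sum.inr i)) = 0 := congrFun c1 i
          show z (Sum.inr i) = 0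
          have hs : star (z (Sum.inr i)) = 0 := by linear_combination (a1 - a3 i) / 2
          simpa using hs
      have n1 := hnn hA (fun i => z (Sum.inl i) + star (z (Sum.inr i)))
      have n2 := hnn hA (fun i => Complex.I * (z (Sum.inl i) - star (z (Sum.inr i))))
      refine div_pos ?_ two_pos
      rcases key with h | h
      · exact add_pos_of_pos_of_nonneg (hA _ h) n2
      · exact add_pos_of_nonneg_of_pos n1 (hA _ h)
    · intro hC x hx
      have hz : Sum.elim x (star x) ≠ 0 := by
        intro hc
        apply hx
        funext i
        exact congrFun hc (Sum.inl i)
      have := hC.dotProduct_mulVec_pos hz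
      rw [Stmt5Aux.quadD_diag, Complex.zero_lt_real] at this
      linarith
  have iAB' : (∀ x : Fin n → ℂ,
      0 ≤ (star x ⬝ᵥ (P₁.mulVec x + (mconj P₂).mulVec (star x))).re) ↔
      (realRep P₁ P₂).PosSemidef := by
    constructor
    · intro hA
      refine Matrix.PosSemidef.of_dotProduct_mulVec_nonneg (Stmt5Aux.hermR P₁ P₂ h₁ h₂) fun y => ?_
      rw [star_trivial, quadR]
      exact hA _
    · intro hB x
      have := hB.dotProduct_mulVec_nonneg (vreal x)
      rw [star_trivial, quadR, Stmt5Aux.cx_vreal] at this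
      exact this
  have iAC' : (∀ x : Fin n → ℂ,
      0 ≤ (star x ⬝ᵥ (P₁.mulVec x + (mconj P₂).mulVec (star x))).re) ↔
      (dlift P₁ P₂).PosSemidef := by
    constructor
    · intro hA
      refine Matrix.PosSemidef.of_dotProduct_mulVec_nonneg (Stmt5Aux.hermD P₁ P₂ h₁ h₂) fun z => ?_
      have hzz : z = Sum.elim (fun i => z (Sum.inl i)) (fun i => z (Sum.inr i)) := by
        funext k; cases k <;> rfl
      have hq := quadD P₁ P₂ h₁ h₂ (fun i => z (Sum.inl i)) (fun i => z (Sum.inr i))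
      rw [← hzz] at hq
      rw [hq, Complex.zero_le_real]
      have n1 := hA (fun i => z (Sum.inl i) + star (z (Sum.inr i)))
      have n2 := hA (fun i => Complex.I * (z (Sum.inl i) - star (z (Sum.inr i))))
      linarith
    · intro hC x
      have := hC.dotProduct_mulVec_nonneg (Sum.elim x (star x))
      rw [Stmt5Aux.quadD_diag, Complex.zero_le_real] at this
      linarith
  exact ⟨iAB, iAB.symm.trans iAC, iAB', iAB'.symm.trans iAC'⟩
end
end

section
/- Let A₂ ∈ ℂ^{n×n} and let M = [[0, A₂^#], [A₂, 0]] ∈ ℂ^{2n×2n}. For every t ∈ ℝ, the matrix exponential exp(tM) equals [[Φ₁(t), Φ₂(t)^#], [Φ₂(t), Φ₁(t)^#]], where Φ₁(t) = Σ_{i=0}^{∞} (t^{2i}/(2i)!) (A₂^# A₂)^i and Φ₂(t) = Σ_{i=0}^{∞} (t^{2i+1}/(2i+1)!) A₂ (A₂^# A₂)^i (both series converge absolutely). -/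
open Matrix
open scoped ComplexOrder

noncomputable section

section Aux
variable {n : ℕ}

lemma mconj_mul' (X Y : Matrix (Fin n) (Fin n) ℂ) :
    mconj (X * Y) = mconj X * mconj Y := Matrix.map_mul

lemma mconj_smul' (r : ℝ) (X : Matrix (Fin n) (Fin n) ℂ) :
    mconj (r • X) = r • mconj X := by
  ext i j; simp [mconj, Matrix.smul_apply, Complex.real_smul]

lemma mconj_add' (X Y : Matrix (Fin n) (Fin n) ℂ) :
    mconj (X + Y) = mconj X + mconj Y := by
  ext i j; simp [mconj]

lemma mconj_mconj' (X : Matrix (Fin n) (Fin n) ℂ) : mconj (mconj X) = X := by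
  ext i j; simp [mconj]

lemma mconj_one' : mconj (1 : Matrix (Fin n) (Fin n) ℂ) = 1 := by
  ext i j; simp [mconj, Matrix.one_apply, apply_ite]

lemma mconj_pow' (X : Matrix (Fin n) (Fin n) ℂ) (k : ℕ) :
    mconj (X ^ k) = (mconj X) ^ k := by
  induction k with
  | zero => simp [mconj_one']
  | succ k ih => rw [pow_succ, mconj_mul', ih, pow_succ]

/-- `X ↦ [[X,0],[0,X^#]]`, an `ℝ`-linear map. -/
def L1 : Matrix (Fin n) (Fin n) ℂ →L[ℝ] Matrix (Fin n ⊕ Fin n) (Fin n ⊕ Fin n) ℂ :=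
  LinearMap.toContinuousLinearMap
  { toFun := fun X => Matrix.fromBlocks X 0 0 (mconj X)
    map_add' := fun X Y => by simp [mconj_add', Matrix.fromBlocks_add]
    map_smul' := fun r X => by simp [mconj_smul', Matrix.fromBlocks_smul] }

/-- `X ↦ [[0,X^#],[X,0]]`, an `ℝ`-linear map. -/
def L2 : Matrix (Fin n) (Fin n) ℂ →L[ℝ] Matrix (Fin n ⊕ Fin n) (Fin n ⊕ Fin n) ℂ :=
  LinearMap.toContinuousLinearMap
  { toFun := fun X => Matrix.fromBlocks 0 (mconj X) X 0
    map_add' := fun X Y => by simp [mconj_add', Matrix.fromBlocks_add]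
    map_smul' := fun r X => by simp [mconj_smul', Matrix.fromBlocks_smul] }

/-- Extraction of the (1,1) block, an `ℝ`-linear map. -/
def T11 : Matrix (Fin n ⊕ Fin n) (Fin n ⊕ Fin n) ℂ →L[ℝ] Matrix (Fin n) (Fin n) ℂ :=
  LinearMap.toContinuousLinearMap
  { toFun := Matrix.toBlocks₁₁
    map_add' := fun X Y => rfl
    map_smul' := fun r X => rfl }

/-- Extraction of the (2,1) block, an `ℝ`-linear map. -/
def T21 : Matrix (Fin n ⊕ Fin n) (Fin n ⊕ Fin n) ℂ →L[ℝ] Matrix (Fin n) (Fin n) ℂ :=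
  LinearMap.toContinuousLinearMap
  { toFun := Matrix.toBlocks₂₁
    map_add' := fun X Y => rfl
    map_smul' := fun r X => rfl }

lemma coeff_smul (r : ℝ) (k : ℕ) (X : Matrix (Fin n ⊕ Fin n) (Fin n ⊕ Fin n) ℂ) :
    ((k.factorial : ℂ))⁻¹ • (r • X) = ((r / k.factorial : ℝ)) • X := by
  rw [← algebraMap_smul ℂ r X, ← algebraMap_smul ℂ ((r / k.factorial : ℝ)) X, smul_smul]
  congr 1
  simp only [Complex.coe_algebraMap]
  push_cast
  rw [div_eq_inv_mul]

lemma L1_apply (X : Matrix (Fin n) (Fin n) ℂ) :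
    L1 X = Matrix.fromBlocks X 0 0 (mconj X) := rfl

lemma L2_apply (X : Matrix (Fin n) (Fin n) ℂ) :
    L2 X = Matrix.fromBlocks 0 (mconj X) X 0 := rfl

lemma T11_apply (X : Matrix (Fin n ⊕ Fin n) (Fin n ⊕ Fin n) ℂ) :
    T11 X = X.toBlocks₁₁ := rfl

lemma T21_apply (X : Matrix (Fin n ⊕ Fin n) (Fin n ⊕ Fin n) ℂ) :
    T21 X = X.toBlocks₂₁ := rfl

end Aux

set_option maxHeartbeats 1000000 in
/-- for the antilinear lifting `M = [[0, A₂^#],[A₂, 0]]`, the matrix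
exponential `exp(tM)` is the doubled-up matrix built from
`Φ₁(t) = Σ t^{2i}/(2i)! (A₂^#A₂)^i` and `Φ₂(t) = Σ t^{2i+1}/(2i+1)! A₂(A₂^#A₂)^i`,
both series being (summably) convergent. -/
theorem stmt_7 (n : ℕ) (A₂ : Matrix (Fin n) (Fin n) ℂ) (t : ℝ)
    (M : Matrix (Fin n ⊕ Fin n) (Fin n ⊕ Fin n) ℂ)
    (hM : M = Matrix.fromBlocks 0 (mconj A₂) A₂ 0) :
    Summable (fun i : ℕ =>
      (t ^ (2 * i) / (Nat.factorial (2 * i) : ℝ)) • (mconj A₂ * A₂) ^ i) ∧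
    Summable (fun i : ℕ =>
      (t ^ (2 * i + 1) / (Nat.factorial (2 * i + 1) : ℝ)) • (A₂ * (mconj A₂ * A₂) ^ i)) ∧
    NormedSpace.exp (t • M) =
      dlift (∑' i : ℕ, (t ^ (2 * i) / (Nat.factorial (2 * i) : ℝ)) • (mconj A₂ * A₂) ^ i)
        (∑' i : ℕ,
          (t ^ (2 * i + 1) / (Nat.factorial (2 * i + 1) : ℝ)) •
            (A₂ * (mconj A₂ * A₂) ^ i)) := by
  letI : SeminormedRing (Matrix (Fin n ⊕ Fin n) (Fin n ⊕ Fin n) ℂ) :=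
    Matrix.linftyOpSemiNormedRing
  letI : NormedRing (Matrix (Fin n ⊕ Fin n) (Fin n ⊕ Fin n) ℂ) := Matrix.linftyOpNormedRing
  letI : NormedAlgebra ℂ (Matrix (Fin n ⊕ Fin n) (Fin n ⊕ Fin n) ℂ) :=
    Matrix.linftyOpNormedAlgebra
  letI : NormedAddCommGroup (Matrix (Fin n) (Fin n) ℂ) := Matrix.linftyOpNormedAddCommGroup
  letI : NormedSpace ℝ (Matrix (Fin n) (Fin n) ℂ) := Matrix.linftyOpNormedSpace
  set B := mconj A₂ with hB
  set C := mconj A₂ * A₂ with hC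
  set φ₁ : ℕ → Matrix (Fin n) (Fin n) ℂ :=
    fun i => (t ^ (2 * i) / (Nat.factorial (2 * i) : ℝ)) • C ^ i with hφ₁def
  set φ₂ : ℕ → Matrix (Fin n) (Fin n) ℂ :=
    fun i => (t ^ (2 * i + 1) / (Nat.factorial (2 * i + 1) : ℝ)) • (A₂ * C ^ i) with hφ₂def
  -- power formulas
  have hsemi : ∀ i : ℕ, (A₂ * B) ^ i * A₂ = A₂ * C ^ i := by
    intro i
    have : SemiconjBy A₂ (B * A₂) (A₂ * B) := by
      simp [SemiconjBy, mul_assoc]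
    simpa [hC, hB] using (this.pow_right i).symm
  have hmconjC : mconj C = A₂ * B := by
    rw [hC, mconj_mul', mconj_mconj']
  have hMsq : M ^ 2 = Matrix.fromBlocks C 0 0 (mconj C) := by
    rw [hM, pow_two, Matrix.fromBlocks_multiply]
    simp [hC, hmconjC, hB, mconj_mul', mconj_mconj']
  have heven : ∀ i : ℕ, M ^ (2 * i) = Matrix.fromBlocks (C ^ i) 0 0 (mconj (C ^ i)) := by
    intro i
    induction i with
    | zero => simp [Matrix.fromBlocks_one, mconj_one']
    | succ i ih =>
      have h2i : 2 * (i + 1) = 2 * i + 2 := by ring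
      rw [h2i, pow_add, ih, hMsq, Matrix.fromBlocks_multiply]
      rw [← mconj_mul', ← pow_succ]
      simp [← pow_succ]
  have hodd : ∀ i : ℕ, M ^ (2 * i + 1) =
      Matrix.fromBlocks 0 (mconj (A₂ * C ^ i)) (A₂ * C ^ i) 0 := by
    intro i
    rw [pow_succ, heven i, hM, Matrix.fromBlocks_multiply]
    have h1 : mconj (C ^ i) * A₂ = A₂ * C ^ i := by
      rw [mconj_pow', hmconjC, hsemi]
    have hs : SemiconjBy B (A₂ * B) (B * A₂) := by
      simp [SemiconjBy, mul_assoc]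
    have h2 : C ^ i * mconj A₂ = mconj (A₂ * C ^ i) := by
      rw [mconj_mul', mconj_pow', hmconjC, ← hB, hC, ← hB]
      exact (hs.pow_right i).symm
    simp [h1, h2, hB]
  -- the exponential series
  set f : ℕ → Matrix (Fin n ⊕ Fin n) (Fin n ⊕ Fin n) ℂ :=
    fun k => ((k.factorial : ℂ))⁻¹ • (t • M) ^ k with hfdef
  have hf : Summable f := NormedSpace.expSeries_summable' (𝕂 := ℂ) (t • M)
  have hfe : ∀ i : ℕ, f (2 * i) = L1 (φ₁ i) := by
    intro i
    rw [hfdef]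
    simp only [smul_pow, heven i, coeff_smul]
    rw [hφ₁def, L1_apply, Matrix.fromBlocks_smul, mconj_smul']
    simp
  have hfo : ∀ i : ℕ, f (2 * i + 1) = L2 (φ₂ i) := by
    intro i
    rw [hfdef]
    simp only [smul_pow, hodd i, coeff_smul]
    rw [hφ₂def, L2_apply, Matrix.fromBlocks_smul, mconj_smul']
    simp
  have hinj2 : Function.Injective (fun i : ℕ => 2 * i) := fun a b h => by dsimp at h; omega
  have hinj2' : Function.Injective (fun i : ℕ => 2 * i + 1) := fun a b h => by dsimp at h; omega
  have hse : Summable (fun i : ℕ => f (2 * i)) := hf.comp_injective hinj2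
  have hso : Summable (fun i : ℕ => f (2 * i + 1)) := hf.comp_injective hinj2'
  have hsφ₁ : Summable φ₁ := by
    have := hse.map (T11 (n := n)) T11.continuous
    convert this using 1
    funext i
    rw [Function.comp_apply, hfe i, L1_apply, T11_apply, Matrix.toBlocks_fromBlocks₁₁]
  have hsφ₂ : Summable φ₂ := by
    have := hso.map (T21 (n := n)) T21.continuous
    convert this using 1
    funext i
    rw [Function.comp_apply, hfo i, L2_apply, T21_apply, Matrix.toBlocks_fromBlocks₂₁]
  refine ⟨hsφ₁, hsφ₂, ?_⟩
  rw [NormedSpace.exp_eq_tsum ℂ]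
  show (∑' k, f k) = _
  have hsplit : (∑' i, f (2 * i)) + ∑' i, f (2 * i + 1) = ∑' k, f k :=
    tsum_even_add_odd hse hso
  rw [← hsplit]
  have h1 : (∑' i, f (2 * i)) = L1 (∑' i, φ₁ i) := by
    rw [L1.map_tsum hsφ₁]
    exact tsum_congr hfe
  have h2 : (∑' i, f (2 * i + 1)) = L2 (∑' i, φ₂ i) := by
    rw [L2.map_tsum hsφ₂]
    exact tsum_congr hfo
  rw [h1, h2]
  rw [L1_apply, L2_apply]
  show _ = Matrix.fromBlocks _ (mconj (∑' i, φ₂ i)) (∑' i, φ₂ i) (mconj (∑' i, φ₁ i))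
  rw [Matrix.fromBlocks_add]
  simp
end
end

section
/- Let A₁, A₂ ∈ ℂ^{n×n}, B₁, B₂ ∈ ℂ^{n×m}, x₀ ∈ ℂ^n, and u : ℕ → ℂ^m. Let x : ℕ → ℂ^n be defined recursively by x(0) = x₀ and x(t+1) = A₁x(t) + A₂^# x(t)^# + B₁u(t) + B₂^# u(t)^#. Then for every t ≥ 1, x(t) = Φ₁(t)x₀ + Φ₂(t)^# x₀^# + Σ_{i=0}^{t−1} [ Φ₁(t−1−i)(B₁u(i) + B₂^# u(i)^#) + Φ₂(t−1−i)^# (B₁u(i) + B₂^# u(i)^#)^# ], where [Φ₁(k); Φ₂(k)] = ({A₁,A₂}_⋄)^k · [I_n; 0] for k ∈ ℕ. -/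
open Matrix
open scoped ComplexOrder

noncomputable section

lemma mconj_mconj {a b : Type*} (A : Matrix a b ℂ) : mconj (mconj A) = A := by
  ext i j; simp [mconj]

lemma mconj_add {a b : Type*} (A B : Matrix a b ℂ) : mconj (A + B) = mconj A + mconj B := by
  ext i j; simp [mconj]

lemma mconj_zero {a b : Type*} : mconj (0 : Matrix a b ℂ) = 0 := by
  ext i j; simp [mconj]

lemma mconj_mul {a b c : Type*} [Fintype b] (A : Matrix a b ℂ) (B : Matrix b c ℂ) :
    mconj (A * B) = mconj A * mconj B := by
  ext i j; simp [mconj, Matrix.mul_apply]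

lemma mulVec_sum'' {a b : Type*} [Fintype b] (A : Matrix a b ℂ) (s : Finset ℕ)
    (f : ℕ → b → ℂ) : A.mulVec (∑ i ∈ s, f i) = ∑ i ∈ s, A.mulVec (f i) :=
  map_sum A.mulVecLin f s

lemma star_mulVec_eq {a b : Type*} [Fintype b] (A : Matrix a b ℂ) (v : b → ℂ) :
    star (A.mulVec v) = (mconj A).mulVec (star v) := by
  ext i
  simp [mconj, Matrix.mulVec, dotProduct]

/-- closed-form solution of the discrete-time complex-valued linear
system `x(t+1) = A₁x(t) + A₂^#x(t)^# + B₁u(t) + B₂^#u(t)^#`, where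
`[Φ₁(k); Φ₂(k)] = ({A₁,A₂}_⋄)^k [I; 0]`. -/
theorem stmt_9 (n m : ℕ) (A₁ A₂ : Matrix (Fin n) (Fin n) ℂ)
    (B₁ B₂ : Matrix (Fin n) (Fin m) ℂ) (x₀ : Fin n → ℂ) (u : ℕ → Fin m → ℂ)
    (x : ℕ → Fin n → ℂ) (hx0 : x 0 = x₀)
    (hx : ∀ t : ℕ, x (t + 1) =
      A₁.mulVec (x t) + (mconj A₂).mulVec (star (x t)) +
        B₁.mulVec (u t) + (mconj B₂).mulVec (star (u t)))
    (Φ₁ Φ₂ : ℕ → Matrix (Fin n) (Fin n) ℂ)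
    (hΦ₁ : ∀ k, Φ₁ k = ((dlift A₁ A₂) ^ k).toBlocks₁₁)
    (hΦ₂ : ∀ k, Φ₂ k = ((dlift A₁ A₂) ^ k).toBlocks₂₁) :
    ∀ t : ℕ, 1 ≤ t →
      x t = (Φ₁ t).mulVec x₀ + (mconj (Φ₂ t)).mulVec (star x₀) +
        ∑ i ∈ Finset.range t,
          ((Φ₁ (t - 1 - i)).mulVec (B₁.mulVec (u i) + (mconj B₂).mulVec (star (u i))) +
            (mconj (Φ₂ (t - 1 - i))).mulVec
              (star (B₁.mulVec (u i) + (mconj B₂).mulVec (star (u i))))) := by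
  have hΦ10 : Φ₁ 0 = 1 := by
    rw [hΦ₁, pow_zero]
    ext i j
    simp [Matrix.toBlocks₁₁, Matrix.one_apply]
  have hΦ20 : Φ₂ 0 = 0 := by
    rw [hΦ₂, pow_zero]
    ext i j
    simp [Matrix.toBlocks₂₁, Matrix.one_apply]
  have hrec : ∀ k, Φ₁ (k+1) = A₁ * Φ₁ k + mconj A₂ * Φ₂ k ∧
      Φ₂ (k+1) = A₂ * Φ₁ k + mconj A₁ * Φ₂ k := by
    intro k
    have h : dlift A₁ A₂ ^ (k+1) =
        Matrix.fromBlocks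
          (A₁ * (dlift A₁ A₂ ^ k).toBlocks₁₁ + mconj A₂ * (dlift A₁ A₂ ^ k).toBlocks₂₁)
          (A₁ * (dlift A₁ A₂ ^ k).toBlocks₁₂ + mconj A₂ * (dlift A₁ A₂ ^ k).toBlocks₂₂)
          (A₂ * (dlift A₁ A₂ ^ k).toBlocks₁₁ + mconj A₁ * (dlift A₁ A₂ ^ k).toBlocks₂₁)
          (A₂ * (dlift A₁ A₂ ^ k).toBlocks₁₂ + mconj A₁ * (dlift A₁ A₂ ^ k).toBlocks₂₂) := by
      rw [pow_succ']
      conv_lhs => rw [← Matrix.fromBlocks_toBlocks (dlift A₁ A₂ ^ k)]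
      rw [dlift, Matrix.fromBlocks_multiply]
    constructor
    · rw [hΦ₁, h, Matrix.toBlocks_fromBlocks₁₁, ← hΦ₁, ← hΦ₂]
    · rw [hΦ₂, h, Matrix.toBlocks_fromBlocks₂₁, ← hΦ₁, ← hΦ₂]
  set w : ℕ → Fin n → ℂ := fun i => B₁.mulVec (u i) + (mconj B₂).mulVec (star (u i)) with hw
  have step : ∀ k (v : Fin n → ℂ),
      A₁.mulVec ((Φ₁ k).mulVec v + (mconj (Φ₂ k)).mulVec (star v)) +
        (mconj A₂).mulVec (star ((Φ₁ k).mulVec v + (mconj (Φ₂ k)).mulVec (star v)))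
      = (Φ₁ (k+1)).mulVec v + (mconj (Φ₂ (k+1))).mulVec (star v) := by
    intro k v
    rw [(hrec k).1, (hrec k).2]
    simp only [star_add, star_mulVec_eq, mconj_mconj, mconj_add, mconj_mul,
      Matrix.add_mulVec, Matrix.mulVec_add, Matrix.mulVec_mulVec, star_star]
    abel
  have key : ∀ t : ℕ,
      x t = (Φ₁ t).mulVec x₀ + (mconj (Φ₂ t)).mulVec (star x₀) +
        ∑ i ∈ Finset.range t,
          ((Φ₁ (t - 1 - i)).mulVec (w i) + (mconj (Φ₂ (t - 1 - i))).mulVec (star (w i))) := by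
    intro t
    induction t with
    | zero =>
      simp [hx0, hΦ10, hΦ20, mconj_zero, Matrix.one_mulVec, Matrix.zero_mulVec]
    | succ t ih =>
      have hxt := hx t
      rw [ih] at hxt
      have hsum : ∀ (a b : Fin n → ℂ),
          A₁.mulVec (a + b) + (mconj A₂).mulVec (star (a + b)) =
          (A₁.mulVec a + (mconj A₂).mulVec (star a)) +
          (A₁.mulVec b + (mconj A₂).mulVec (star b)) := by
        intro a b
        simp only [star_add, Matrix.mulVec_add]
        abel
      have hFsum :
          A₁.mulVec (∑ i ∈ Finset.range t,
              ((Φ₁ (t - 1 - i)).mulVec (w i) + (mconj (Φ₂ (t - 1 - i))).mulVec (star (w i)))) +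
            (mconj A₂).mulVec (star (∑ i ∈ Finset.range t,
              ((Φ₁ (t - 1 - i)).mulVec (w i) + (mconj (Φ₂ (t - 1 - i))).mulVec (star (w i))))) =
          ∑ i ∈ Finset.range t,
            ((Φ₁ (t - i)).mulVec (w i) + (mconj (Φ₂ (t - i))).mulVec (star (w i))) := by
        rw [star_sum, mulVec_sum'', mulVec_sum'', ← Finset.sum_add_distrib]
        refine Finset.sum_congr rfl fun i hi => ?_
        have h1 : t - i = (t - 1 - i) + 1 := by
          have := Finset.mem_range.mp hi; omega
        rw [h1]
        exact step (t - 1 - i) (w i)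
      have hrhs : ∑ i ∈ Finset.range (t + 1),
            ((Φ₁ (t + 1 - 1 - i)).mulVec (w i) +
              (mconj (Φ₂ (t + 1 - 1 - i))).mulVec (star (w i))) =
          (∑ i ∈ Finset.range t,
            ((Φ₁ (t - i)).mulVec (w i) + (mconj (Φ₂ (t - i))).mulVec (star (w i)))) + w t := by
        simp only [Nat.add_sub_cancel]
        rw [Finset.sum_range_succ, Nat.sub_self, hΦ10, hΦ20, mconj_zero,
          Matrix.one_mulVec, Matrix.zero_mulVec, add_zero]
      calc x (t + 1)
          = A₁.mulVec (x t) + (mconj A₂).mulVec (star (x t)) + w t := by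
            rw [hx t, hw]; abel_nf
        _ = ((Φ₁ (t+1)).mulVec x₀ + (mconj (Φ₂ (t+1))).mulVec (star x₀)) +
            (∑ i ∈ Finset.range t,
              ((Φ₁ (t - i)).mulVec (w i) + (mconj (Φ₂ (t - i))).mulVec (star (w i)))) + w t := by
            rw [ih, hsum, step t x₀, hFsum]
        _ = _ := by rw [hrhs]; abel
  intro t _
  rw [key t]
end
end

section
/- Let A₂ ∈ ℂ^{n×n}, B₂ ∈ ℂ^{n×m}, C₂ ∈ ℂ^{p×n}. Then: (i) the PBH controllability condition for the lifted antilinear system, rank [[sI_n, −A₂^#, 0, B₂^#], [−A₂, sI_n, B₂, 0]] = 2n for all s ∈ ℂ, holds if and only if rank [sI_n − A₂^#A₂, B₂^#, A₂^#B₂] = n for all s ∈ ℂ; and (ii) the PBH observability condition, rank of the stacked matrix [[sI_n, −A₂^#], [−A₂, sI_n], [0, C₂^#], [C₂, 0]] = 2n for all s ∈ ℂ, holds if and only if rank of the stacked matrix [sI_n − A₂^#A₂; C₂; C₂^#A₂] = n for all s ∈ ℂ. -/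
open Matrix
open scoped ComplexOrder

noncomputable section

private lemma rank_eq_card_cols_iff {m n : Type*} [Fintype m] [Fintype n] [DecidableEq n]
    (A : Matrix m n ℂ) : A.rank = Fintype.card n ↔ ∀ v : n → ℂ, A *ᵥ v = 0 → v = 0 := by
  have h2 := LinearMap.finrank_range_add_finrank_ker A.mulVecLin
  rw [Module.finrank_pi] at h2
  constructor
  · intro h v hv
    have hk : Module.finrank ℂ (LinearMap.ker A.mulVecLin) = 0 := by
      rw [Matrix.rank] at h; omega
    have hker : LinearMap.ker A.mulVecLin = ⊥ := Submodule.finrank_eq_zero.mp hk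
    have := LinearMap.ker_eq_bot'.mp hker v (by simpa using hv)
    exact this
  · intro h
    have hker : LinearMap.ker A.mulVecLin = ⊥ :=
      LinearMap.ker_eq_bot'.mpr fun v hv => h v (by simpa using hv)
    rw [hker, finrank_bot, add_zero] at h2
    rw [Matrix.rank, h2]

private lemma rank_eq_card_rows_iff {m n : Type*} [Fintype m] [Fintype n] [DecidableEq m]
    (A : Matrix m n ℂ) : A.rank = Fintype.card m ↔ ∀ v : m → ℂ, v ᵥ* A = 0 → v = 0 := by
  rw [← Matrix.rank_transpose, rank_eq_card_cols_iff]
  simp_rw [Matrix.mulVec_transpose]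

private lemma vecMul_smul_one {n : Type*} [Fintype n] [DecidableEq n] (s : ℂ) (v : n → ℂ) :
    v ᵥ* (s • (1 : Matrix n n ℂ)) = s • v := by
  funext i
  simp [Matrix.vecMul, dotProduct, Matrix.one_apply, mul_ite, Finset.mul_sum, mul_comm]

private lemma smul_one_mulVec {n : Type*} [Fintype n] [DecidableEq n] (s : ℂ) (v : n → ℂ) :
    (s • (1 : Matrix n n ℂ)) *ᵥ v = s • v := by
  simp [Matrix.smul_mulVec]

private lemma star_vecMul_mconj {k l : Type*} [Fintype k] (M : Matrix k l ℂ) (v : k → ℂ) :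
    star v ᵥ* mconj M = star (v ᵥ* M) := by
  funext j
  simp [mconj, Matrix.vecMul, dotProduct, Pi.star_apply, map_sum, mul_comm]

private lemma mconj_mulVec_star {k l : Type*} [Fintype l] (M : Matrix k l ℂ) (v : l → ℂ) :
    mconj M *ᵥ star v = star (M *ᵥ v) := by
  funext j
  simp [mconj, Matrix.mulVec, dotProduct, Pi.star_apply, map_sum, mul_comm]

private lemma sum_elim_eq_zero_iff {a b : Type*} (x : a → ℂ) (y : b → ℂ) :
    Sum.elim x y = 0 ↔ x = 0 ∧ y = 0 := by
  constructor
  · intro h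
    constructor <;> funext i
    · exact congrFun h (Sum.inl i)
    · exact congrFun h (Sum.inr i)
  · rintro ⟨rfl, rfl⟩; simp

private lemma mconj_mconj_s11 {k l : Type*} (M : Matrix k l ℂ) : mconj (mconj M) = M := by
  ext i j; simp [mconj]

private lemma key_c {n m : ℕ} (A₂ : Matrix (Fin n) (Fin n) ℂ) (B₂ : Matrix (Fin n) (Fin m) ℂ) :
    (∀ s : ℂ, ∀ x y : Fin n → ℂ,
        y ᵥ* A₂ = s • x → x ᵥ* mconj A₂ = s • y → y ᵥ* B₂ = 0 → x ᵥ* mconj B₂ = 0 →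
        x = 0 ∧ y = 0) ↔
    (∀ s : ℂ, ∀ z : Fin n → ℂ,
        z ᵥ* (mconj A₂ * A₂) = s • z → z ᵥ* mconj B₂ = 0 → z ᵥ* (mconj A₂ * B₂) = 0 →
        z = 0) := by
  constructor
  · intro H s z h1 h2 h3
    obtain ⟨w, hw⟩ := IsAlgClosed.exists_pow_nat_eq s (by norm_num : 0 < 2)
    by_cases hw0 : w = 0
    · have hs : s = 0 := by rw [← hw, hw0]; ring
      subst hs
      have hy : z ᵥ* mconj A₂ = 0 := by
        refine (H 0 0 (z ᵥ* mconj A₂) ?_ ?_ ?_ ?_).2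
        · rw [Matrix.vecMul_vecMul, h1]; simp
        · simp [Matrix.zero_vecMul]
        · rw [Matrix.vecMul_vecMul, h3]
        · simp [Matrix.zero_vecMul]
      refine (H 0 z 0 ?_ ?_ ?_ ?_).1
      · simp [Matrix.zero_vecMul]
      · rw [hy]; simp
      · simp [Matrix.zero_vecMul]
      · exact h2
    · refine (H w z (w⁻¹ • (z ᵥ* mconj A₂)) ?_ ?_ ?_ ?_).1
      · rw [Matrix.smul_vecMul, Matrix.vecMul_vecMul, h1, ← hw]
        rw [smul_smul]
        congr 1
        field_simp
      · rw [smul_inv_smul₀ hw0]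
      · rw [Matrix.smul_vecMul, Matrix.vecMul_vecMul, h3, smul_zero]
      · exact h2
  · intro H s x y h1 h2 h3 h4
    have hx : x = 0 := by
      refine H (s * s) x ?_ h4 ?_
      · rw [← Matrix.vecMul_vecMul, h2, Matrix.smul_vecMul, h1, smul_smul]
      · rw [← Matrix.vecMul_vecMul, h2, Matrix.smul_vecMul, h3, smul_zero]
    subst hx
    have hyA : y ᵥ* A₂ = 0 := by rw [h1, smul_zero]
    have hy : star y = 0 := by
      refine H 0 (star y) ?_ ?_ ?_
      · rw [← Matrix.vecMul_vecMul, star_vecMul_mconj, hyA]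
        simp [Matrix.zero_vecMul]
      · rw [star_vecMul_mconj, h3, star_zero]
      · rw [← Matrix.vecMul_vecMul, star_vecMul_mconj, hyA]
        simp [Matrix.zero_vecMul]
    constructor
    · rfl
    · simpa using congrArg star hy

private lemma key_o {n p : ℕ} (A₂ : Matrix (Fin n) (Fin n) ℂ) (C₂ : Matrix (Fin p) (Fin n) ℂ) :
    (∀ s : ℂ, ∀ x y : Fin n → ℂ,
        mconj A₂ *ᵥ y = s • x → A₂ *ᵥ x = s • y → mconj C₂ *ᵥ y = 0 → C₂ *ᵥ x = 0 →
        x = 0 ∧ y = 0) ↔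
    (∀ s : ℂ, ∀ z : Fin n → ℂ,
        (mconj A₂ * A₂) *ᵥ z = s • z → C₂ *ᵥ z = 0 → (mconj C₂ * A₂) *ᵥ z = 0 →
        z = 0) := by
  constructor
  · intro H s z h1 h2 h3
    obtain ⟨w, hw⟩ := IsAlgClosed.exists_pow_nat_eq s (by norm_num : 0 < 2)
    by_cases hw0 : w = 0
    · have hs : s = 0 := by rw [← hw, hw0]; ring
      subst hs
      have hy : A₂ *ᵥ z = 0 := by
        refine (H 0 0 (A₂ *ᵥ z) ?_ ?_ ?_ ?_).2
        · rw [Matrix.mulVec_mulVec, h1]; simp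
        · simp [Matrix.mulVec_zero]
        · rw [Matrix.mulVec_mulVec, h3]
        · simp [Matrix.mulVec_zero]
      refine (H 0 z 0 ?_ ?_ ?_ ?_).1
      · simp [Matrix.mulVec_zero]
      · rw [hy]; simp
      · simp [Matrix.mulVec_zero]
      · exact h2
    · refine (H w z (w⁻¹ • (A₂ *ᵥ z)) ?_ ?_ ?_ ?_).1
      · rw [Matrix.mulVec_smul, Matrix.mulVec_mulVec, h1, ← hw]
        rw [smul_smul]
        congr 1
        field_simp
      · rw [smul_inv_smul₀ hw0]
      · rw [Matrix.mulVec_smul, Matrix.mulVec_mulVec, h3, smul_zero]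
      · exact h2
  · intro H s x y h1 h2 h3 h4
    have hx : x = 0 := by
      refine H (s * s) x ?_ h4 ?_
      · rw [← Matrix.mulVec_mulVec, h2, Matrix.mulVec_smul, h1, smul_smul]
      · rw [← Matrix.mulVec_mulVec, h2, Matrix.mulVec_smul, h3, smul_zero]
    subst hx
    have hyA : mconj A₂ *ᵥ y = 0 := by rw [h1, smul_zero]
    have hy : star y = 0 := by
      refine H 0 (star y) ?_ ?_ ?_
      · have : A₂ *ᵥ star y = 0 := by
          have h := congrArg star hyA
          rw [← mconj_mulVec_star, mconj_mconj_s11, star_zero] at h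
          exact h
        rw [← Matrix.mulVec_mulVec, this]
        simp [Matrix.mulVec_zero]
      · have h := congrArg star h3
        rw [← mconj_mulVec_star, mconj_mconj_s11, star_zero] at h
        exact h
      · have hA : A₂ *ᵥ star y = 0 := by
          have h := congrArg star hyA
          rw [← mconj_mulVec_star, mconj_mconj_s11, star_zero] at h
          exact h
        rw [← Matrix.mulVec_mulVec, hA]
        simp [Matrix.mulVec_zero]
    constructor
    · rfl
    · simpa using congrArg star hy

private lemma bridge_c {n m : ℕ} (A₂ : Matrix (Fin n) (Fin n) ℂ) (B₂ : Matrix (Fin n) (Fin m) ℂ) (s : ℂ) :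
    (Matrix.fromCols
        (Matrix.fromBlocks (s • (1 : Matrix (Fin n) (Fin n) ℂ)) (-(mconj A₂)) (-A₂)
          (s • (1 : Matrix (Fin n) (Fin n) ℂ)))
        (Matrix.fromBlocks 0 (mconj B₂) B₂ 0)).rank = 2 * n ↔
    (∀ x y : Fin n → ℂ, y ᵥ* A₂ = s • x → x ᵥ* mconj A₂ = s • y → y ᵥ* B₂ = 0 →
      x ᵥ* mconj B₂ = 0 → x = 0 ∧ y = 0) := by
  have hiff := rank_eq_card_rows_iff (Matrix.fromCols
        (Matrix.fromBlocks (s • (1 : Matrix (Fin n) (Fin n) ℂ)) (-(mconj A₂)) (-A₂)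
          (s • (1 : Matrix (Fin n) (Fin n) ℂ)))
        (Matrix.fromBlocks 0 (mconj B₂) B₂ 0))
  rw [Fintype.card_sum, Fintype.card_fin, ← two_mul] at hiff
  rw [hiff]
  have hcompute : ∀ x y : Fin n → ℂ,
      Sum.elim x y ᵥ* (Matrix.fromCols
        (Matrix.fromBlocks (s • (1 : Matrix (Fin n) (Fin n) ℂ)) (-(mconj A₂)) (-A₂)
          (s • (1 : Matrix (Fin n) (Fin n) ℂ)))
        (Matrix.fromBlocks 0 (mconj B₂) B₂ 0)) =
      Sum.elim (Sum.elim (s • x - y ᵥ* A₂) (s • y - x ᵥ* mconj A₂))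
        (Sum.elim (y ᵥ* B₂) (x ᵥ* mconj B₂)) := by
    intro x y
    rw [Matrix.vecMul_fromCols, Matrix.vecMul_fromBlocks, Matrix.vecMul_fromBlocks]
    simp only [Sum.elim_comp_inl, Sum.elim_comp_inr, Matrix.vecMul_neg, Matrix.vecMul_zero,
      vecMul_smul_one, zero_add, add_zero]
    simp only [← sub_eq_add_neg, neg_add_eq_sub]
  constructor
  · intro h x y h1 h2 h3 h4
    have hv := h (Sum.elim x y) (by rw [hcompute, h1, h2, h3, h4]; simp)
    exact (sum_elim_eq_zero_iff x y).mp hv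
  · intro h v hv
    have hv' : v = Sum.elim (v ∘ Sum.inl) (v ∘ Sum.inr) := (Sum.elim_comp_inl_inr v).symm
    set x := v ∘ Sum.inl with hxdef
    set y := v ∘ Sum.inr with hydef
    rw [hv', hcompute] at hv
    obtain ⟨hA, hB⟩ := (sum_elim_eq_zero_iff _ _).mp hv
    obtain ⟨hA1, hA2⟩ := (sum_elim_eq_zero_iff _ _).mp hA
    obtain ⟨hB1, hB2⟩ := (sum_elim_eq_zero_iff _ _).mp hB
    obtain ⟨hx0, hy0⟩ := h x y (sub_eq_zero.mp hA1).symm (sub_eq_zero.mp hA2).symm hB1 hB2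
    rw [hv', hx0, hy0]
    simp

private lemma bridge_rc {n m : ℕ} (A₂ : Matrix (Fin n) (Fin n) ℂ) (B₂ : Matrix (Fin n) (Fin m) ℂ) (s : ℂ) :
    (Matrix.fromCols (s • (1 : Matrix (Fin n) (Fin n) ℂ) - mconj A₂ * A₂)
        (Matrix.fromCols (mconj B₂) (mconj A₂ * B₂))).rank = n ↔
    (∀ z : Fin n → ℂ, z ᵥ* (mconj A₂ * A₂) = s • z → z ᵥ* mconj B₂ = 0 →
      z ᵥ* (mconj A₂ * B₂) = 0 → z = 0) := by
  have hiff := rank_eq_card_rows_iff (Matrix.fromCols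
        (s • (1 : Matrix (Fin n) (Fin n) ℂ) - mconj A₂ * A₂)
        (Matrix.fromCols (mconj B₂) (mconj A₂ * B₂)))
  rw [Fintype.card_fin] at hiff
  rw [hiff]
  have hcompute : ∀ z : Fin n → ℂ,
      z ᵥ* (Matrix.fromCols (s • (1 : Matrix (Fin n) (Fin n) ℂ) - mconj A₂ * A₂)
        (Matrix.fromCols (mconj B₂) (mconj A₂ * B₂))) =
      Sum.elim (s • z - z ᵥ* (mconj A₂ * A₂))
        (Sum.elim (z ᵥ* mconj B₂) (z ᵥ* (mconj A₂ * B₂))) := by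
    intro z
    rw [Matrix.vecMul_fromCols, Matrix.vecMul_fromCols, Matrix.vecMul_sub, vecMul_smul_one]
  constructor
  · intro h z h1 h2 h3
    exact h z (by rw [hcompute, h1, h2, h3]; simp)
  · intro h z hz
    rw [hcompute] at hz
    obtain ⟨h1, h2⟩ := (sum_elim_eq_zero_iff _ _).mp hz
    obtain ⟨h2a, h2b⟩ := (sum_elim_eq_zero_iff _ _).mp h2
    exact h z (sub_eq_zero.mp h1).symm h2a h2b

private lemma bridge_o {n p : ℕ} (A₂ : Matrix (Fin n) (Fin n) ℂ) (C₂ : Matrix (Fin p) (Fin n) ℂ) (s : ℂ) :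
    (Matrix.fromRows
        (Matrix.fromBlocks (s • (1 : Matrix (Fin n) (Fin n) ℂ)) (-(mconj A₂)) (-A₂)
          (s • (1 : Matrix (Fin n) (Fin n) ℂ)))
        (Matrix.fromBlocks 0 (mconj C₂) C₂ 0)).rank = 2 * n ↔
    (∀ x y : Fin n → ℂ, mconj A₂ *ᵥ y = s • x → A₂ *ᵥ x = s • y → mconj C₂ *ᵥ y = 0 →
      C₂ *ᵥ x = 0 → x = 0 ∧ y = 0) := by
  have hiff := rank_eq_card_cols_iff (Matrix.fromRows
        (Matrix.fromBlocks (s • (1 : Matrix (Fin n) (Fin n) ℂ)) (-(mconj A₂)) (-A₂)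
          (s • (1 : Matrix (Fin n) (Fin n) ℂ)))
        (Matrix.fromBlocks 0 (mconj C₂) C₂ 0))
  rw [Fintype.card_sum, Fintype.card_fin, ← two_mul] at hiff
  rw [hiff]
  have hcompute : ∀ x y : Fin n → ℂ,
      (Matrix.fromRows
        (Matrix.fromBlocks (s • (1 : Matrix (Fin n) (Fin n) ℂ)) (-(mconj A₂)) (-A₂)
          (s • (1 : Matrix (Fin n) (Fin n) ℂ)))
        (Matrix.fromBlocks 0 (mconj C₂) C₂ 0)) *ᵥ Sum.elim x y =
      Sum.elim (Sum.elim (s • x - mconj A₂ *ᵥ y) (s • y - A₂ *ᵥ x))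
        (Sum.elim (mconj C₂ *ᵥ y) (C₂ *ᵥ x)) := by
    intro x y
    rw [Matrix.fromRows_mulVec, Matrix.fromBlocks_mulVec, Matrix.fromBlocks_mulVec]
    simp only [Sum.elim_comp_inl, Sum.elim_comp_inr, Matrix.neg_mulVec, Matrix.zero_mulVec,
      smul_one_mulVec, zero_add, add_zero]
    simp only [← sub_eq_add_neg, neg_add_eq_sub]
  constructor
  · intro h x y h1 h2 h3 h4
    have hv := h (Sum.elim x y) (by rw [hcompute, h1, h2, h3, h4]; simp)
    exact (sum_elim_eq_zero_iff x y).mp hv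
  · intro h v hv
    have hv' : v = Sum.elim (v ∘ Sum.inl) (v ∘ Sum.inr) := (Sum.elim_comp_inl_inr v).symm
    set x := v ∘ Sum.inl with hxdef
    set y := v ∘ Sum.inr with hydef
    rw [hv', hcompute] at hv
    obtain ⟨hA, hB⟩ := (sum_elim_eq_zero_iff _ _).mp hv
    obtain ⟨hA1, hA2⟩ := (sum_elim_eq_zero_iff _ _).mp hA
    obtain ⟨hB1, hB2⟩ := (sum_elim_eq_zero_iff _ _).mp hB
    obtain ⟨hx0, hy0⟩ := h x y (sub_eq_zero.mp hA1).symm (sub_eq_zero.mp hA2).symm hB1 hB2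
    rw [hv', hx0, hy0]
    simp

private lemma bridge_ro {n p : ℕ} (A₂ : Matrix (Fin n) (Fin n) ℂ) (C₂ : Matrix (Fin p) (Fin n) ℂ) (s : ℂ) :
    (Matrix.fromRows (s • (1 : Matrix (Fin n) (Fin n) ℂ) - mconj A₂ * A₂)
        (Matrix.fromRows C₂ (mconj C₂ * A₂))).rank = n ↔
    (∀ z : Fin n → ℂ, (mconj A₂ * A₂) *ᵥ z = s • z → C₂ *ᵥ z = 0 →
      (mconj C₂ * A₂) *ᵥ z = 0 → z = 0) := by
  have hiff := rank_eq_card_cols_iff (Matrix.fromRows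
        (s • (1 : Matrix (Fin n) (Fin n) ℂ) - mconj A₂ * A₂)
        (Matrix.fromRows C₂ (mconj C₂ * A₂)))
  rw [Fintype.card_fin] at hiff
  rw [hiff]
  have hcompute : ∀ z : Fin n → ℂ,
      (Matrix.fromRows (s • (1 : Matrix (Fin n) (Fin n) ℂ) - mconj A₂ * A₂)
        (Matrix.fromRows C₂ (mconj C₂ * A₂))) *ᵥ z =
      Sum.elim (s • z - (mconj A₂ * A₂) *ᵥ z)
        (Sum.elim (C₂ *ᵥ z) ((mconj C₂ * A₂) *ᵥ z)) := by
    intro z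
    rw [Matrix.fromRows_mulVec, Matrix.fromRows_mulVec, Matrix.sub_mulVec, smul_one_mulVec]
  constructor
  · intro h z h1 h2 h3
    exact h z (by rw [hcompute, h1, h2, h3]; simp)
  · intro h z hz
    rw [hcompute] at hz
    obtain ⟨h1, h2⟩ := (sum_elim_eq_zero_iff _ _).mp hz
    obtain ⟨h2a, h2b⟩ := (sum_elim_eq_zero_iff _ _).mp h2
    exact h z (sub_eq_zero.mp h1).symm h2a h2b


/-- PBH controllability/observability of the lifted antilinear system
is equivalent to the corresponding reduced rank-`n` PBH conditions. -/
theorem stmt_11 (n m p : ℕ) (A₂ : Matrix (Fin n) (Fin n) ℂ)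
    (B₂ : Matrix (Fin n) (Fin m) ℂ) (C₂ : Matrix (Fin p) (Fin n) ℂ) :
    ((∀ s : ℂ,
        (Matrix.fromCols
          (Matrix.fromBlocks (s • (1 : Matrix (Fin n) (Fin n) ℂ)) (-(mconj A₂)) (-A₂)
            (s • (1 : Matrix (Fin n) (Fin n) ℂ)))
          (Matrix.fromBlocks 0 (mconj B₂) B₂ 0)).rank = 2 * n) ↔
      (∀ s : ℂ,
        (Matrix.fromCols
          (s • (1 : Matrix (Fin n) (Fin n) ℂ) - mconj A₂ * A₂)
          (Matrix.fromCols (mconj B₂) (mconj A₂ * B₂))).rank = n)) ∧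
    ((∀ s : ℂ,
        (Matrix.fromRows
          (Matrix.fromBlocks (s • (1 : Matrix (Fin n) (Fin n) ℂ)) (-(mconj A₂)) (-A₂)
            (s • (1 : Matrix (Fin n) (Fin n) ℂ)))
          (Matrix.fromBlocks 0 (mconj C₂) C₂ 0)).rank = 2 * n) ↔
      (∀ s : ℂ,
        (Matrix.fromRows
          (s • (1 : Matrix (Fin n) (Fin n) ℂ) - mconj A₂ * A₂)
          (Matrix.fromRows C₂ (mconj C₂ * A₂))).rank = n)) := by
  constructor
  · exact (forall_congr' fun s => bridge_c A₂ B₂ s).trans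
      ((key_c A₂ B₂).trans (forall_congr' fun s => (bridge_rc A₂ B₂ s).symm))
  · exact (forall_congr' fun s => bridge_o A₂ C₂ s).trans
      ((key_o A₂ C₂).trans (forall_congr' fun s => (bridge_ro A₂ C₂ s).symm))
end
end

section
/- Let n ≥ 1 and A₂ ∈ ℂ^{n×n}, and let M = [[0, A₂^#], [A₂, 0]] ∈ ℂ^{2n×2n}. Then: (i) every eigenvalue of M has modulus strictly less than 1 if and only if every eigenvalue of A₂^# A₂ has modulus strictly less than 1 (i.e., the spectral radius ρ(A₂^# A₂) < 1); and (ii) M always has an eigenvalue with nonnegative real part; in particular M is never a Hurwitz matrix (it is impossible that every eigenvalue of M has negative real part). -/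
open Matrix
open scoped ComplexOrder

noncomputable section

lemma mem_spectrum_iff_det {k : Type*} [Fintype k] [DecidableEq k]
    (N : Matrix k k ℂ) (μ : ℂ) :
    μ ∈ spectrum ℂ N ↔ (μ • (1 : Matrix k k ℂ) - N).det = 0 := by
  rw [spectrum.mem_iff, Matrix.isUnit_iff_isUnit_det, isUnit_iff_ne_zero, not_not,
    Algebra.algebraMap_eq_smul_one]

lemma spec_blockDiag {m : Type*} [Fintype m] [DecidableEq m] (C D : Matrix m m ℂ) :
    spectrum ℂ (Matrix.fromBlocks C 0 0 D) = spectrum ℂ C ∪ spectrum ℂ D := by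
  ext μ
  have h1 : μ • (1 : Matrix (m ⊕ m) (m ⊕ m) ℂ) - Matrix.fromBlocks C 0 0 D
      = Matrix.fromBlocks (μ • 1 - C) 0 0 (μ • 1 - D) := by
    rw [← Matrix.fromBlocks_one, Matrix.fromBlocks_smul]
    simp [Matrix.fromBlocks_add, Matrix.fromBlocks_neg, sub_eq_add_neg]
  simp [mem_spectrum_iff_det, h1, Matrix.det_fromBlocks_zero₂₁, mul_eq_zero, Set.mem_union]

section Aux
variable {n : ℕ} (hn : 1 ≤ n)

lemma Msq (A₂ : Matrix (Fin n) (Fin n) ℂ) :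
    (Matrix.fromBlocks 0 (mconj A₂) A₂ 0 : Matrix (Fin n ⊕ Fin n) (Fin n ⊕ Fin n) ℂ) ^ 2
      = Matrix.fromBlocks (mconj A₂ * A₂) 0 0 (A₂ * mconj A₂) := by
  rw [pow_two, Matrix.fromBlocks_multiply]
  simp

end Aux


/-- for `M = [[0, A₂^#],[A₂, 0]]` with `n ≥ 1`: `M` is Schur iff
`A₂^#A₂` is Schur, and `M` always has an eigenvalue with nonnegative real part,
so `M` is never Hurwitz. -/
theorem stmt_12 (n : ℕ) (hn : 1 ≤ n) (A₂ : Matrix (Fin n) (Fin n) ℂ)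
    (M : Matrix (Fin n ⊕ Fin n) (Fin n ⊕ Fin n) ℂ)
    (hM : M = Matrix.fromBlocks 0 (mconj A₂) A₂ 0) :
    ((∀ μ ∈ spectrum ℂ M, ‖μ‖ < 1) ↔
      (∀ μ ∈ spectrum ℂ (mconj A₂ * A₂), ‖μ‖ < 1)) ∧
    (∃ μ ∈ spectrum ℂ M, 0 ≤ μ.re) ∧
    ¬(∀ μ ∈ spectrum ℂ M, μ.re < 0) := by
  haveI : Nonempty (Fin n) := ⟨⟨0, hn⟩⟩
  set B := mconj A₂ with hB
  have hsq : M ^ 2 = Matrix.fromBlocks (B * A₂) 0 0 (A₂ * B) := by rw [hM]; exact Msq A₂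
  have hspec2 : spectrum ℂ (M ^ 2) = (· ^ 2) '' spectrum ℂ M :=
    spectrum.map_pow_of_pos M (by norm_num)
  have hunion : spectrum ℂ (M ^ 2) = spectrum ℂ (B * A₂) ∪ spectrum ℂ (A₂ * B) := by
    rw [hsq]; exact spec_blockDiag _ _
  have hswap := spectrum.nonzero_mul_comm (𝕜 := ℂ) A₂ B
  have part1 : (∀ μ ∈ spectrum ℂ M, ‖μ‖ < 1) ↔
      (∀ μ ∈ spectrum ℂ (B * A₂), ‖μ‖ < 1) := by
    constructor
    · intro h lam hlam
      have : lam ∈ spectrum ℂ (M ^ 2) := by rw [hunion]; exact Or.inl hlam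
      rw [hspec2] at this
      obtain ⟨μ, hμ, rfl⟩ := this
      have := h μ hμ
      have h0 := norm_nonneg μ
      rw [norm_pow]
      nlinarith
    · intro h μ hμ
      have hmem : μ ^ 2 ∈ spectrum ℂ (M ^ 2) := by
        rw [hspec2]; exact ⟨μ, hμ, rfl⟩
      rw [hunion] at hmem
      have h0 := norm_nonneg μ
      have key : ‖μ ^ 2‖ < 1 := by
        rcases hmem with hm | hm
        · exact h _ hm
        · by_cases hz : μ = 0
          · simp [hz]
          · have hz2 : μ ^ 2 ≠ 0 := pow_ne_zero _ hz
            have : μ ^ 2 ∈ spectrum ℂ (B * A₂) \ {0} := by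
              rw [← hswap]; exact ⟨hm, hz2⟩
            exact h _ this.1
      rw [norm_pow] at key
      nlinarith
  have part2 : ∃ μ ∈ spectrum ℂ M, 0 ≤ μ.re := by
    set S : Matrix (Fin n ⊕ Fin n) (Fin n ⊕ Fin n) ℂ := Matrix.fromBlocks 1 0 0 (-1) with hS
    have hSS : S * S = 1 := by
      rw [hS, Matrix.fromBlocks_multiply, ← Matrix.fromBlocks_one]
      congr 1 <;> simp
    let u : (Matrix (Fin n ⊕ Fin n) (Fin n ⊕ Fin n) ℂ)ˣ := ⟨S, S, hSS, hSS⟩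
    have hu : ((u⁻¹ : _ˣ) : Matrix (Fin n ⊕ Fin n) (Fin n ⊕ Fin n) ℂ) = S := rfl
    have hconj : (u : Matrix (Fin n ⊕ Fin n) (Fin n ⊕ Fin n) ℂ) * M * ((u⁻¹ : _ˣ) : Matrix (Fin n ⊕ Fin n) (Fin n ⊕ Fin n) ℂ) = -M := by
      rw [hu]
      show S * M * S = -M
      rw [hM, hS]
      simp [Matrix.fromBlocks_multiply, Matrix.fromBlocks_neg]
    have hnegspec : spectrum ℂ (-M) = spectrum ℂ M := by
      rw [← hconj]; exact spectrum.units_conjugate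
    obtain ⟨μ, hμ⟩ := spectrum.nonempty_of_isAlgClosed_of_finiteDimensional ℂ M
    rcases le_or_gt 0 μ.re with hre | hre
    · exact ⟨μ, hμ, hre⟩
    · refine ⟨-μ, ?_, by simp; linarith⟩
      rw [← hnegspec, ← spectrum.neg_eq]
      exact Set.neg_mem_neg.mpr hμ
  refine ⟨part1, part2, ?_⟩
  intro h
  obtain ⟨μ, hμ, hre⟩ := part2
  exact absurd (h μ hμ) (not_lt.mpr hre)
end
end

section
/- Let A₂ ∈ ℂ^{n×n}, let C₂ ∈ ℂ^{p×n} satisfy rank [sI_n − A₂^#A₂; C₂; C₂^#A₂] = n for all s ∈ ℂ, and let C_N ∈ ℂ^{q×n} satisfy rank [sI_n − A₂^#A₂; C_N] = n for all s ∈ ℂ. Then the following are equivalent: (1) every eigenvalue of A₂^# A₂ has modulus strictly less than 1; (2) there exists a unique Hermitian positive definite P₁ ∈ ℂ^{n×n} with A₂^H P₁^# A₂ − P₁ = −C₂^H C₂; (3) there exists a unique Hermitian positive definite P_N ∈ ℂ^{n×n} with (A₂^#A₂)^H P_N (A₂^#A₂) − P_N = −C_N^H C_N. Moreover, if every eigenvalue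 of A₂^#A₂ has modulus < 1, then a Hermitian matrix P₁ satisfies A₂^H P₁^# A₂ − P₁ = −C₂^H C₂ if and only if it satisfies (A₂^#A₂)^H P₁ (A₂^#A₂) − P₁ = −C_N^H C_N with C_N = [C₂; C₂^#A₂] (the (p+p)×n stacked matrix). -/
open Matrix
open scoped ComplexOrder

noncomputable section

namespace Stmt13Aux

open Filter Topology
open scoped ENNReal NNReal

attribute [local instance] Matrix.frobeniusNormedAddCommGroup Matrix.frobeniusNormedRing
  Matrix.frobeniusNormedAlgebra

variable {n : ℕ}

/-- Stability predicate. -/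
def Stab (A : Matrix (Fin n) (Fin n) ℂ) : Prop :=
  ∀ μ ∈ spectrum ℂ A, ‖μ‖ < 1

lemma spectralRadius_lt_one {A : Matrix (Fin n) (Fin n) ℂ} (h : Stab A) :
    spectralRadius ℂ A < 1 := by
  have hfin : (spectrum ℂ A).Finite := A.finite_spectrum
  have : spectralRadius ℂ A = hfin.toFinset.sup (fun k => (‖k‖₊ : ℝ≥0∞)) := by
    rw [Finset.sup_eq_iSup, spectralRadius]
    simp [Set.Finite.mem_toFinset]
  rw [this]
  rw [Finset.sup_lt_iff (by norm_num : (⊥ : ℝ≥0∞) < 1)]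
  intro k hk
  rw [Set.Finite.mem_toFinset] at hk
  have := h k hk
  have h1 : ‖k‖ < 1 := by exact this
  have h2 : (‖k‖₊ : ℝ) < 1 := h1
  exact_mod_cast (by exact_mod_cast h2 : ‖k‖₊ < (1 : ℝ≥0))

lemma pow_norm_tendsto_zero {A : Matrix (Fin n) (Fin n) ℂ} (h : Stab A) :
    Tendsto (fun k : ℕ => ‖A ^ k‖) atTop (𝓝 0) := by
  haveI : CompleteSpace (Matrix (Fin n) (Fin n) ℂ) := FiniteDimensional.complete ℂ _
  have hρ := spectralRadius_lt_one h
  obtain ⟨r, hr1, hr2⟩ := exists_between hρ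
  have hrtop : r ≠ ⊤ := (hr2.trans_le le_top).ne
  lift r to ℝ≥0 using hrtop with r' hr'
  have hgel := spectrum.pow_nnnorm_pow_one_div_tendsto_nhds_spectralRadius A
  have hev : ∀ᶠ k : ℕ in atTop, (‖A ^ k‖₊ : ℝ≥0∞) ^ (1 / (k : ℝ)) < (r' : ℝ≥0∞) :=
    hgel.eventually_lt_const hr1
  have hr'1 : (r' : ℝ) < 1 := by exact_mod_cast hr2
  have hbound : ∀ᶠ k : ℕ in atTop, ‖A ^ k‖ ≤ (r' : ℝ) ^ k := by
    filter_upwards [hev, eventually_ge_atTop 1] with k hk hk1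
    have hk0 : (k : ℝ) ≠ 0 := by positivity
    have h1 : ((‖A ^ k‖₊ : ℝ≥0∞) ^ (1 / (k : ℝ))) ^ (k : ℝ) ≤ ((r' : ℝ≥0∞)) ^ (k : ℝ) :=
      ENNReal.rpow_le_rpow hk.le (by positivity)
    rw [← ENNReal.rpow_mul, one_div, inv_mul_cancel₀ hk0, ENNReal.rpow_one,
      ENNReal.rpow_natCast, ← ENNReal.coe_pow, ENNReal.coe_le_coe] at h1
    have h2 : ‖A ^ k‖₊ ≤ r' ^ k := h1
    calc ‖A ^ k‖ = ((‖A ^ k‖₊ : ℝ)) := rfl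
      _ ≤ ((r' ^ k : ℝ≥0) : ℝ) := by exact_mod_cast h2
      _ = (r' : ℝ) ^ k := by push_cast; ring
  have hgeo : Tendsto (fun k : ℕ => (r' : ℝ) ^ k) atTop (𝓝 0) :=
    tendsto_pow_atTop_nhds_zero_of_lt_one (by positivity) hr'1
  exact squeeze_zero' (by filter_upwards with k; positivity) hbound hgeo

/-- Uniqueness core: the homogeneous Stein equation has only the zero solution. -/
lemma stein_homog {A X : Matrix (Fin n) (Fin n) ℂ} (h : Stab A)
    (hX : Aᴴ * X * A = X) : X = 0 := by
  have key : ∀ k : ℕ, (Aᴴ) ^ k * X * A ^ k = X := by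
    intro k
    induction k with
    | zero => simp
    | succ k ih =>
      have h1 : (Aᴴ) ^ (k + 1) * X * A ^ (k + 1) = (Aᴴ) ^ k * (Aᴴ * X * A) * A ^ k := by
        rw [pow_succ, pow_succ']
        simp only [mul_assoc]
      rw [h1, hX, ih]
  have hb : ∀ k : ℕ, ‖X‖ ≤ ‖A ^ k‖ * ‖X‖ * ‖A ^ k‖ := by
    intro k
    calc ‖X‖ = ‖(Aᴴ) ^ k * X * A ^ k‖ := by rw [key k]
      _ ≤ ‖(Aᴴ) ^ k * X‖ * ‖A ^ k‖ := norm_mul_le _ _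
      _ ≤ ‖(Aᴴ) ^ k‖ * ‖X‖ * ‖A ^ k‖ := by
          have := norm_mul_le ((Aᴴ) ^ k) X
          exact mul_le_mul_of_nonneg_right this (norm_nonneg _)
      _ = ‖A ^ k‖ * ‖X‖ * ‖A ^ k‖ := by
          rw [← Matrix.conjTranspose_pow, Matrix.frobenius_norm_conjTranspose]
  have hlim : Tendsto (fun k : ℕ => ‖A ^ k‖ * ‖X‖ * ‖A ^ k‖) atTop (𝓝 0) := by
    have h0 := pow_norm_tendsto_zero h
    have := (h0.mul_const ‖X‖).mul h0
    simpa using this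
  have : ‖X‖ ≤ 0 := ge_of_tendsto' hlim hb
  exact norm_le_zero_iff.mp this

lemma stein_unique {A P P' R : Matrix (Fin n) (Fin n) ℂ} (h : Stab A)
    (h1 : Aᴴ * P * A - P = R) (h2 : Aᴴ * P' * A - P' = R) : P = P' := by
  have h4 : Aᴴ * P * A - P = Aᴴ * P' * A - P' := h1.trans h2.symm
  have h3 : Aᴴ * (P - P') * A = P - P' := by
    calc Aᴴ * (P - P') * A
        = (Aᴴ * P * A - P) - (Aᴴ * P' * A - P') + (P - P') := by
          rw [mul_sub, sub_mul]; abel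
      _ = P - P' := by rw [h4, sub_self, zero_add]
  have := stein_homog h h3
  exact sub_eq_zero.mp this

/-- Existence of a Hermitian solution to the Stein equation under stability. -/
lemma stein_exists {m' : Type*} [Fintype m'] {A : Matrix (Fin n) (Fin n) ℂ}
    (h : Stab A) (C : Matrix m' (Fin n) ℂ) :
    ∃ P : Matrix (Fin n) (Fin n) ℂ, Pᴴ = P ∧ Aᴴ * P * A - P = -(Cᴴ * C) := by
  let T : Matrix (Fin n) (Fin n) ℂ →ₗ[ℂ] Matrix (Fin n) (Fin n) ℂ :=
    { toFun := fun X => X - Aᴴ * X * A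
      map_add' := by intro X Y; simp only [mul_add, add_mul]; abel
      map_smul' := by
        intro c X
        simp only [RingHom.id_apply, Matrix.mul_smul, Matrix.smul_mul, smul_sub] }
  have hinj : Function.Injective T := by
    rw [injective_iff_map_eq_zero]
    intro X hX
    have : Aᴴ * X * A = X := by
      have hX' : X - Aᴴ * X * A = 0 := hX
      have := sub_eq_zero.mp hX'
      exact this.symm
    exact stein_homog h this
  obtain ⟨P, hP⟩ := LinearMap.surjective_of_injective hinj (Cᴴ * C)
  have hPdef : P - Aᴴ * P * A = Cᴴ * C := hP
  have hherm : Pᴴ = P := by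
    have hct := congrArg Matrix.conjTranspose hPdef
    have hctr : Pᴴ - Aᴴ * Pᴴ * A = Cᴴ * C := by
      simpa [Matrix.conjTranspose_sub, Matrix.conjTranspose_mul, mul_assoc] using hct
    apply hinj
    show Pᴴ - Aᴴ * Pᴴ * A = P - Aᴴ * P * A
    rw [hctr, hPdef]
  refine ⟨P, hherm, ?_⟩
  rw [← hPdef]; abel

lemma dot_conj {m' : Type*} [Fintype m'] (M : Matrix m' (Fin n) ℂ)
    (P : Matrix m' m' ℂ) (x : Fin n → ℂ) :
    star x ⬝ᵥ (Mᴴ * P * M) *ᵥ x = star (M *ᵥ x) ⬝ᵥ P *ᵥ (M *ᵥ x) := by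
  simp only [← Matrix.mulVec_mulVec, Matrix.dotProduct_mulVec, Matrix.star_mulVec]

lemma dot_chc {m' : Type*} [Fintype m'] (C : Matrix m' (Fin n) ℂ) (x : Fin n → ℂ) :
    star x ⬝ᵥ (Cᴴ * C) *ᵥ x = star (C *ᵥ x) ⬝ᵥ (C *ᵥ x) := by
  simp only [← Matrix.mulVec_mulVec, Matrix.dotProduct_mulVec, Matrix.star_mulVec]

lemma sum_identity {m' : Type*} [Fintype m'] {A : Matrix (Fin n) (Fin n) ℂ}
    {C : Matrix m' (Fin n) ℂ} {P : Matrix (Fin n) (Fin n) ℂ}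
    (e : Aᴴ * P * A - P = -(Cᴴ * C)) (x : Fin n → ℂ) (m : ℕ) :
    star x ⬝ᵥ P *ᵥ x =
      (∑ k ∈ Finset.range m,
        star (C *ᵥ (A ^ k *ᵥ x)) ⬝ᵥ (C *ᵥ (A ^ k *ᵥ x))) +
      star (A ^ m *ᵥ x) ⬝ᵥ P *ᵥ (A ^ m *ᵥ x) := by
  have hP : P = Cᴴ * C + Aᴴ * P * A := by
    have h := e
    rw [sub_eq_iff_eq_add] at h
    rw [h]; abel
  induction m with
  | zero => simp
  | succ m ih =>
    rw [ih, Finset.sum_range_succ]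
    have hy : A ^ (m + 1) *ᵥ x = A *ᵥ (A ^ m *ᵥ x) := by
      rw [Matrix.mulVec_mulVec, ← pow_succ']
    set y := A ^ m *ᵥ x
    have key : star y ⬝ᵥ P *ᵥ y =
        star (C *ᵥ y) ⬝ᵥ (C *ᵥ y) + star (A *ᵥ y) ⬝ᵥ P *ᵥ (A *ᵥ y) := by
      conv_lhs => rw [hP]
      rw [Matrix.add_mulVec, dotProduct_add, dot_chc, dot_conj]
    rw [key, hy]
    ring

/-- Positive definiteness of the solution under observability. -/
lemma stein_posdef {m' : Type*} [Fintype m'] {A : Matrix (Fin n) (Fin n) ℂ}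
    {C : Matrix m' (Fin n) ℂ} {P : Matrix (Fin n) (Fin n) ℂ} (h : Stab A)
    (hobs : ∀ x : Fin n → ℂ, (∀ k : ℕ, C *ᵥ (A ^ k *ᵥ x) = 0) → x = 0)
    (hherm : Pᴴ = P) (e : Aᴴ * P * A - P = -(Cᴴ * C)) : P.PosDef := by
  refine Matrix.PosDef.of_dotProduct_mulVec_pos hherm ?_
  intro x hx
  -- find k₀ with nonzero output
  have hk₀ : ∃ k₀ : ℕ, C *ᵥ (A ^ k₀ *ᵥ x) ≠ 0 := by
    by_contra hcon
    push_neg at hcon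
    exact hx (hobs x hcon)
  obtain ⟨k₀, hk₀⟩ := hk₀
  set g : ℕ → ℂ := fun k => star (C *ᵥ (A ^ k *ᵥ x)) ⬝ᵥ (C *ᵥ (A ^ k *ᵥ x)) with hg
  set z : ℂ := star x ⬝ᵥ P *ᵥ x with hz
  set r : ℕ → ℂ := fun m => star (A ^ m *ᵥ x) ⬝ᵥ P *ᵥ (A ^ m *ᵥ x) with hr
  have hid : ∀ m, z = (∑ k ∈ Finset.range m, g k) + r m := fun m => sum_identity e x m
  -- remainder tends to zero
  have hrlim : Tendsto r atTop (𝓝 0) := by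
    have hApow : Tendsto (fun m : ℕ => A ^ m) atTop (𝓝 0) :=
      tendsto_zero_iff_norm_tendsto_zero.mpr (pow_norm_tendsto_zero h)
    let L : Matrix (Fin n) (Fin n) ℂ →ₗ[ℂ] (Fin n → ℂ) :=
      { toFun := fun M => M *ᵥ x
        map_add' := fun M N => Matrix.add_mulVec M N x
        map_smul' := fun c M => by simp [Matrix.smul_mulVec] }
    have hL : Continuous L := L.continuous_of_finiteDimensional
    have hy : Tendsto (fun m : ℕ => A ^ m *ᵥ x) atTop (𝓝 0) := by
      have := (hL.tendsto 0).comp hApow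
      simpa [L, Matrix.zero_mulVec, Function.comp_def] using this
    have hgc : Continuous fun y : Fin n → ℂ => star y ⬝ᵥ P *ᵥ y := by
      have heq : (fun y : Fin n → ℂ => star y ⬝ᵥ P *ᵥ y) =
          fun y => ∑ i, star (y i) * ∑ j, P i j * y j := by
        funext y
        simp [dotProduct, Matrix.mulVec]
      rw [heq]
      exact continuous_finset_sum _ fun i _ =>
        ((continuous_apply i).star.mul
          (continuous_finset_sum _ fun j _ => continuous_const.mul (continuous_apply j)))
    have hcomp := (hgc.tendsto 0).comp hy
    have hval : (star (0 : Fin n → ℂ) ⬝ᵥ P *ᵥ (0 : Fin n → ℂ)) = 0 := by simp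
    rw [hval] at hcomp
    exact hcomp
  -- partial sums tend to z
  have hslim : Tendsto (fun m => ∑ k ∈ Finset.range m, g k) atTop (𝓝 z) := by
    have : (fun m => ∑ k ∈ Finset.range m, g k) = fun m => z - r m := by
      funext m
      rw [hid m]; ring
    rw [this]
    simpa using tendsto_const_nhds.sub hrlim
  have hgnonneg : ∀ k, 0 ≤ g k := fun k => dotProduct_star_self_nonneg _
  have hgre : ∀ k, 0 ≤ (g k).re ∧ (g k).im = 0 := by
    intro k
    have := hgnonneg k
    rw [Complex.le_def] at this
    exact ⟨by simpa using this.1, by simpa using this.2.symm⟩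
  -- the imaginary part of z is zero
  have him : Tendsto (fun m => (∑ k ∈ Finset.range m, g k).im) atTop (𝓝 z.im) :=
    (Complex.continuous_im.tendsto z).comp hslim
  have him0 : (fun m => (∑ k ∈ Finset.range m, g k).im) = fun _ => (0 : ℝ) := by
    funext m
    rw [Complex.im_sum]
    exact Finset.sum_eq_zero fun k _ => (hgre k).2
  have hzim : z.im = 0 := by
    rw [him0] at him
    exact tendsto_nhds_unique him tendsto_const_nhds
  -- the real part of z is positive
  have hgk₀pos : 0 < (g k₀).re := by
    have hne : g k₀ ≠ 0 := by
      rw [hg]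
      simpa using (dotProduct_star_self_eq_zero).not.mpr hk₀
    have := lt_of_le_of_ne (hgnonneg k₀) (Ne.symm hne)
    rw [Complex.lt_def] at this
    simpa using this.1
  have hre : Tendsto (fun m => (∑ k ∈ Finset.range m, g k).re) atTop (𝓝 z.re) :=
    (Complex.continuous_re.tendsto z).comp hslim
  have hzre : (g k₀).re ≤ z.re := by
    apply ge_of_tendsto hre
    filter_upwards [eventually_ge_atTop (k₀ + 1)] with m hm
    rw [Complex.re_sum]
    exact Finset.single_le_sum (fun k _ => (hgre k).1)
      (Finset.mem_range.mpr (Nat.lt_of_lt_of_le (Nat.lt_succ_self k₀) hm))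
  rw [Complex.lt_def]
  constructor
  · simpa using lt_of_lt_of_le hgk₀pos hzre
  · simpa using hzim.symm

/-- Necessity: a positive definite solution plus PBH implies stability. -/
lemma stein_nec {m' : Type*} [Fintype m'] {A : Matrix (Fin n) (Fin n) ℂ}
    {C : Matrix m' (Fin n) ℂ} {P : Matrix (Fin n) (Fin n) ℂ}
    (hker : ∀ (s : ℂ) (v : Fin n → ℂ),
      (s • (1 : Matrix (Fin n) (Fin n) ℂ) - A) *ᵥ v = 0 → C *ᵥ v = 0 → v = 0)
    (hPD : P.PosDef) (e : Aᴴ * P * A - P = -(Cᴴ * C)) : Stab A := by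
  intro μ hμ
  by_contra hcon
  push_neg at hcon
  -- eigenvector
  have hnu : ¬IsUnit (algebraMap ℂ (Matrix (Fin n) (Fin n) ℂ) μ - A) := spectrum.mem_iff.mp hμ
  rw [Algebra.algebraMap_eq_smul_one] at hnu
  have hdet : (μ • (1 : Matrix (Fin n) (Fin n) ℂ) - A).det = 0 := by
    by_contra hd
    exact hnu ((Matrix.isUnit_iff_isUnit_det _).mpr (isUnit_iff_ne_zero.mpr hd))
  obtain ⟨v, hv0, hv⟩ := (Matrix.exists_mulVec_eq_zero_iff).mpr hdet
  have hAv : A *ᵥ v = μ • v := by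
    have h1 : μ • v - A *ᵥ v = 0 := by
      have := hv
      rwa [Matrix.sub_mulVec, Matrix.smul_mulVec, Matrix.one_mulVec] at this
    have := sub_eq_zero.mp h1
    exact this.symm
  set z : ℂ := star v ⬝ᵥ P *ᵥ v with hzdef
  have hz : 0 < z := hPD.dotProduct_mulVec_pos hv0
  set g : ℂ := star (C *ᵥ v) ⬝ᵥ (C *ᵥ v) with hgdef
  have hgnn : 0 ≤ g := dotProduct_star_self_nonneg _
  -- evaluate the equation at v
  have heqv : star v ⬝ᵥ (Aᴴ * P * A - P) *ᵥ v = star v ⬝ᵥ (-(Cᴴ * C)) *ᵥ v := by rw [e]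
  have hlhs : star v ⬝ᵥ (Aᴴ * P * A - P) *ᵥ v = ((Complex.normSq μ : ℂ) - 1) * z := by
    rw [Matrix.sub_mulVec, dotProduct_sub, dot_conj, hAv]
    have : star (μ • v) ⬝ᵥ P *ᵥ (μ • v) = (starRingEnd ℂ μ * μ) * z := by
      rw [star_smul, Matrix.mulVec_smul, smul_dotProduct, dotProduct_smul]
      simp only [smul_eq_mul, hzdef, Complex.star_def]
      ring
    rw [this]
    have hnsq : (starRingEnd ℂ μ) * μ = (Complex.normSq μ : ℂ) := by
      rw [mul_comm, Complex.mul_conj]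
    rw [hnsq]
    ring
  have hrhs : star v ⬝ᵥ (-(Cᴴ * C)) *ᵥ v = -g := by
    rw [Matrix.neg_mulVec, dotProduct_neg, dot_chc]
  have hmain : ((Complex.normSq μ : ℂ) - 1) * z = -g := by
    rw [← hlhs, ← hrhs, heqv]
  have hd : (0 : ℝ) ≤ Complex.normSq μ - 1 := by
    have h1 : (1 : ℝ) ≤ ‖μ‖ := hcon
    have : (1 : ℝ) ≤ ‖μ‖ ^ 2 := one_le_pow₀ h1
    rw [Complex.sq_norm] at this
    linarith
  have hcoe : ((Complex.normSq μ : ℂ) - 1) = ((Complex.normSq μ - 1 : ℝ) : ℂ) := by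
    push_cast; ring
  rcases eq_or_lt_of_le hd with hd0 | hdpos
  · -- |μ| = 1, so C v = 0 and PBH is violated
    have hzero : ((Complex.normSq μ : ℂ) - 1) = 0 := by
      rw [hcoe, ← hd0]; simp
    rw [hzero, zero_mul] at hmain
    have hgz : g = 0 := by
      have := hmain.symm
      rwa [neg_eq_zero] at this
    have hCv : C *ᵥ v = 0 := by
      have h0 : star (C *ᵥ v) ⬝ᵥ (C *ᵥ v) = 0 := by rw [← hgdef]; exact hgz
      exact dotProduct_star_self_eq_zero.mp h0
    exact hv0 (hker μ v hv hCv)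
  · -- |μ| > 1: contradiction with positivity
    have hdpos' : (0 : ℂ) < ((Complex.normSq μ - 1 : ℝ) : ℂ) := by
      rw [Complex.lt_def]
      constructor
      · simpa using hdpos
      · simp
    have hpos : 0 < ((Complex.normSq μ : ℂ) - 1) * z := by
      rw [hcoe]
      exact mul_pos hdpos' hz
    rw [hmain] at hpos
    have : -g ≤ 0 := neg_nonpos.mpr hgnn
    exact absurd (lt_of_lt_of_le hpos this) (lt_irrefl 0)

/-- Full column rank implies trivial kernel. -/
lemma rank_inj {l : Type*} [Fintype l] {M : Matrix l (Fin n) ℂ} (h : M.rank = n)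
    {v : Fin n → ℂ} (hv : M *ᵥ v = 0) : v = 0 := by
  have h1 := LinearMap.finrank_range_add_finrank_ker M.mulVecLin
  have h2 : Module.finrank ℂ (Fin n → ℂ) = n := by
    rw [Module.finrank_pi]; simp
  rw [h2] at h1
  have h3 : Module.finrank ℂ (LinearMap.ker M.mulVecLin) = 0 := by
    have : M.rank = Module.finrank ℂ (LinearMap.range M.mulVecLin) := rfl
    omega
  have h4 : LinearMap.ker M.mulVecLin = ⊥ := Submodule.finrank_eq_zero.mp h3
  have h5 : v ∈ LinearMap.ker M.mulVecLin := by
    rw [LinearMap.mem_ker, Matrix.mulVecLin_apply]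
    exact hv
  rw [h4] at h5
  exact h5

/-- PBH implies observability. -/
lemma pbh_obs {m' : Type*} [Fintype m'] (A : Matrix (Fin n) (Fin n) ℂ)
    (C : Matrix m' (Fin n) ℂ)
    (h : ∀ (s : ℂ) (v : Fin n → ℂ),
      (s • (1 : Matrix (Fin n) (Fin n) ℂ) - A) *ᵥ v = 0 → C *ᵥ v = 0 → v = 0) :
    ∀ x : Fin n → ℂ, (∀ k : ℕ, C *ᵥ (A ^ k *ᵥ x) = 0) → x = 0 := by
  set N : Submodule ℂ (Fin n → ℂ) :=
    ⨅ k : ℕ, LinearMap.ker (C.mulVecLin ∘ₗ (A ^ k).mulVecLin) with hN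
  have hmem : ∀ x : Fin n → ℂ, x ∈ N ↔ ∀ k : ℕ, C *ᵥ (A ^ k *ᵥ x) = 0 := by
    intro x
    simp [hN, Submodule.mem_iInf, LinearMap.mem_ker, Matrix.mulVecLin_apply]
  intro x hx
  by_contra hx0
  haveI : Nontrivial ↥N := by
    refine ⟨⟨⟨x, (hmem x).mpr hx⟩, 0, ?_⟩⟩
    simp only [ne_eq, Submodule.mk_eq_zero]
    exact hx0
  have hinv : ∀ y ∈ N, A.mulVecLin y ∈ N := by
    intro y hy
    rw [hmem] at hy ⊢
    intro k
    have hk := hy (k + 1)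
    rw [pow_succ] at hk
    rw [Matrix.mulVecLin_apply, Matrix.mulVec_mulVec]
    rwa [← Matrix.mulVec_mulVec, Matrix.mulVec_mulVec] at hk
  let f : Module.End ℂ ↥N := A.mulVecLin.restrict hinv
  obtain ⟨μ, hμ⟩ := Module.End.exists_eigenvalue f
  obtain ⟨v, hv⟩ := hμ.exists_hasEigenvector
  have hAv : A *ᵥ (v : Fin n → ℂ) = μ • (v : Fin n → ℂ) := by
    have h1 := hv.apply_eq_smul
    have h2 := congrArg (Subtype.val) h1
    simpa [f, LinearMap.restrict_apply, Matrix.mulVecLin_apply] using h2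
  have hCv : C *ᵥ (v : Fin n → ℂ) = 0 := by
    have := (hmem (v : Fin n → ℂ)).mp v.2 0
    simpa using this
  have hv0 : (v : Fin n → ℂ) = 0 := by
    apply h μ (v : Fin n → ℂ) _ hCv
    rw [Matrix.sub_mulVec, Matrix.smul_mulVec, Matrix.one_mulVec, hAv, sub_self]
  exact hv.right (by exact_mod_cast Subtype.ext hv0)

/-! ### mconj algebra -/

lemma mconj_mul {a b c : Type*} [Fintype b] (M : Matrix a b ℂ) (N : Matrix b c ℂ) :
    mconj (M * N) = mconj M * mconj N := Matrix.map_mul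

lemma mconj_mconj {a b : Type*} (M : Matrix a b ℂ) : mconj (mconj M) = M := by
  ext i j; simp [mconj]

lemma conjTranspose_mconj {a b : Type*} (M : Matrix a b ℂ) : (mconj M)ᴴ = Mᵀ := by
  ext i j; simp [mconj, Matrix.conjTranspose_apply]

lemma mconj_conjTranspose {a b : Type*} (M : Matrix a b ℂ) : mconj (Mᴴ) = Mᵀ := by
  ext i j; simp [mconj, Matrix.conjTranspose_apply]

lemma mconj_sub {a b : Type*} (M N : Matrix a b ℂ) :
    mconj (M - N) = mconj M - mconj N := by
  ext i j; simp [mconj]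

lemma mconj_add {a b : Type*} (M N : Matrix a b ℂ) :
    mconj (M + N) = mconj M + mconj N := by
  ext i j; simp [mconj]

lemma mconj_neg {a b : Type*} (M : Matrix a b ℂ) : mconj (-M) = -mconj M := by
  ext i j; simp [mconj]

variable (A₂ : Matrix (Fin n) (Fin n) ℂ)

/-- The antilinear Stein operator. -/
def S (X : Matrix (Fin n) (Fin n) ℂ) : Matrix (Fin n) (Fin n) ℂ :=
  A₂ᴴ * mconj X * A₂

lemma S_SS (X : Matrix (Fin n) (Fin n) ℂ) :
    (mconj A₂ * A₂)ᴴ * X * (mconj A₂ * A₂) = S A₂ (S A₂ X) := by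
  rw [S, S, mconj_mul, mconj_mul, mconj_conjTranspose, mconj_mconj,
    Matrix.conjTranspose_mul, conjTranspose_mconj]
  simp only [mul_assoc]

lemma S_sub (X Y : Matrix (Fin n) (Fin n) ℂ) : S A₂ (X - Y) = S A₂ X - S A₂ Y := by
  rw [S, S, S, mconj_sub, mul_sub, sub_mul]

lemma S_neg (X : Matrix (Fin n) (Fin n) ℂ) : S A₂ (-X) = -S A₂ X := by
  rw [S, S, mconj_neg, mul_neg, neg_mul]

lemma S_add (X Y : Matrix (Fin n) (Fin n) ℂ) : S A₂ (X + Y) = S A₂ X + S A₂ Y := by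
  rw [S, S, S, mconj_add, mul_add, add_mul]

variable {p : ℕ} (C₂ : Matrix (Fin p) (Fin n) ℂ)

lemma CN'_sq :
    (Matrix.fromRows C₂ (mconj C₂ * A₂))ᴴ * Matrix.fromRows C₂ (mconj C₂ * A₂) =
      C₂ᴴ * C₂ + S A₂ (C₂ᴴ * C₂) := by
  rw [Matrix.conjTranspose_fromRows_eq_fromCols_conjTranspose,
    Matrix.fromCols_mul_fromRows]
  congr 1
  rw [S, mconj_mul, mconj_conjTranspose, Matrix.conjTranspose_mul, conjTranspose_mconj]
  simp only [Matrix.mul_assoc]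

/-- From the antilinear Stein equation to the doubled one (pure algebra). -/
lemma e1_to_e2 {P : Matrix (Fin n) (Fin n) ℂ}
    (h1 : A₂ᴴ * mconj P * A₂ - P = -(C₂ᴴ * C₂)) :
    (mconj A₂ * A₂)ᴴ * P * (mconj A₂ * A₂) - P =
      -((Matrix.fromRows C₂ (mconj C₂ * A₂))ᴴ * Matrix.fromRows C₂ (mconj C₂ * A₂)) := by
  have h1' : S A₂ P = P - C₂ᴴ * C₂ := by
    rw [S]
    have := sub_eq_iff_eq_add.mp h1
    rw [this]; abel
  rw [S_SS, CN'_sq, h1', S_sub, h1']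
  abel

/-- From the doubled Stein equation back to the antilinear one, under stability. -/
lemma e2_to_e1 {P : Matrix (Fin n) (Fin n) ℂ} (hst : Stab (mconj A₂ * A₂))
    (h2 : (mconj A₂ * A₂)ᴴ * P * (mconj A₂ * A₂) - P =
      -((Matrix.fromRows C₂ (mconj C₂ * A₂))ᴴ * Matrix.fromRows C₂ (mconj C₂ * A₂))) :
    A₂ᴴ * mconj P * A₂ - P = -(C₂ᴴ * C₂) := by
  set Q : Matrix (Fin n) (Fin n) ℂ := S A₂ P - P + C₂ᴴ * C₂ with hQ
  have h2' : S A₂ (S A₂ P) - P = -(C₂ᴴ * C₂ + S A₂ (C₂ᴴ * C₂)) := by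
    rw [← S_SS, ← CN'_sq]
    exact h2
  have hSQ : S A₂ Q = S A₂ (S A₂ P) - S A₂ P + S A₂ (C₂ᴴ * C₂) := by
    rw [hQ, S_add, S_sub]
  have hQS : Q + S A₂ Q = 0 := by
    rw [hQ, hSQ]
    have : S A₂ P - P + C₂ᴴ * C₂ + (S A₂ (S A₂ P) - S A₂ P + S A₂ (C₂ᴴ * C₂)) =
        (S A₂ (S A₂ P) - P) + (C₂ᴴ * C₂ + S A₂ (C₂ᴴ * C₂)) := by abel
    rw [this, h2']
    abel
  have hSQneg : S A₂ Q = -Q := eq_neg_of_add_eq_zero_right hQS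
  have hfix : (mconj A₂ * A₂)ᴴ * Q * (mconj A₂ * A₂) = Q := by
    rw [S_SS, hSQneg, S_neg, hSQneg, neg_neg]
  have hQ0 : Q = 0 := stein_homog hst hfix
  have hfin : S A₂ P - P + C₂ᴴ * C₂ = 0 := by rw [← hQ]; exact hQ0
  have := eq_neg_of_add_eq_zero_left hfin
  rw [S] at this
  exact this

end Stmt13Aux

/-- Lyapunov stability criteria for the discrete-time antilinear
system: stability of `A₂^#A₂` (all eigenvalues of modulus < 1) is equivalent to the
unique solvability, by a positive definite matrix, of either of the two Lyapunov
equations; and under stability the two equations (with `C_N = [C₂; C₂^#A₂]`) have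
the same Hermitian solutions. -/
theorem stmt_13 (n p q : ℕ) (A₂ : Matrix (Fin n) (Fin n) ℂ)
    (C₂ : Matrix (Fin p) (Fin n) ℂ) (CN : Matrix (Fin q) (Fin n) ℂ)
    (hobs : ∀ s : ℂ,
      (Matrix.fromRows (s • (1 : Matrix (Fin n) (Fin n) ℂ) - mconj A₂ * A₂)
        (Matrix.fromRows C₂ (mconj C₂ * A₂))).rank = n)
    (hobsN : ∀ s : ℂ,
      (Matrix.fromRows (s • (1 : Matrix (Fin n) (Fin n) ℂ) - mconj A₂ * A₂) CN).rank = n) :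
    ((∀ μ ∈ spectrum ℂ (mconj A₂ * A₂), ‖μ‖ < 1) ↔
      (∃! P₁ : Matrix (Fin n) (Fin n) ℂ,
        P₁.PosDef ∧ A₂ᴴ * mconj P₁ * A₂ - P₁ = -(C₂ᴴ * C₂))) ∧
    ((∀ μ ∈ spectrum ℂ (mconj A₂ * A₂), ‖μ‖ < 1) ↔
      (∃! PN : Matrix (Fin n) (Fin n) ℂ,
        PN.PosDef ∧
          (mconj A₂ * A₂)ᴴ * PN * (mconj A₂ * A₂) - PN = -(CNᴴ * CN))) ∧
    ((∀ μ ∈ spectrum ℂ (mconj A₂ * A₂), ‖μ‖ < 1) →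
      ∀ P₁ : Matrix (Fin n) (Fin n) ℂ, P₁.IsHermitian →
        (A₂ᴴ * mconj P₁ * A₂ - P₁ = -(C₂ᴴ * C₂) ↔
          (mconj A₂ * A₂)ᴴ * P₁ * (mconj A₂ * A₂) - P₁ =
            -((Matrix.fromRows C₂ (mconj C₂ * A₂))ᴴ *
              Matrix.fromRows C₂ (mconj C₂ * A₂)))) := by
  classical
  have hker2 : ∀ (s : ℂ) (v : Fin n → ℂ),
      (s • (1 : Matrix (Fin n) (Fin n) ℂ) - mconj A₂ * A₂) *ᵥ v = 0 →
      (Matrix.fromRows C₂ (mconj C₂ * A₂)) *ᵥ v = 0 → v = 0 := by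
    intro s v h1 h2
    apply Stmt13Aux.rank_inj (hobs s)
    rw [Matrix.fromRows_mulVec, h1, h2]
    ext (i | i) <;> rfl
  have hkerN : ∀ (s : ℂ) (v : Fin n → ℂ),
      (s • (1 : Matrix (Fin n) (Fin n) ℂ) - mconj A₂ * A₂) *ᵥ v = 0 →
      CN *ᵥ v = 0 → v = 0 := by
    intro s v h1 h2
    apply Stmt13Aux.rank_inj (hobsN s)
    rw [Matrix.fromRows_mulVec, h1, h2]
    ext (i | i) <;> rfl
  refine ⟨⟨?_, ?_⟩, ⟨?_, ?_⟩, ?_⟩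
  · -- stability → unique PD solution of the antilinear equation
    intro hst
    have hst' : Stmt13Aux.Stab (mconj A₂ * A₂) := hst
    obtain ⟨P, hherm, heq2⟩ :=
      Stmt13Aux.stein_exists hst' (Matrix.fromRows C₂ (mconj C₂ * A₂))
    have hPD := Stmt13Aux.stein_posdef hst'
      (Stmt13Aux.pbh_obs (mconj A₂ * A₂) (Matrix.fromRows C₂ (mconj C₂ * A₂)) hker2)
      hherm heq2
    have heq1 : A₂ᴴ * mconj P * A₂ - P = -(C₂ᴴ * C₂) :=
      Stmt13Aux.e2_to_e1 A₂ C₂ hst' heq2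
    refine ⟨P, ⟨hPD, heq1⟩, ?_⟩
    rintro P' ⟨hPD', heq1'⟩
    exact Stmt13Aux.stein_unique hst' (Stmt13Aux.e1_to_e2 A₂ C₂ heq1') heq2
  · -- unique PD solution of the antilinear equation → stability
    rintro ⟨P, ⟨hPD, heq1⟩, -⟩
    exact Stmt13Aux.stein_nec hker2 hPD (Stmt13Aux.e1_to_e2 A₂ C₂ heq1)
  · -- stability → unique PD solution of the doubled equation
    intro hst
    have hst' : Stmt13Aux.Stab (mconj A₂ * A₂) := hst
    obtain ⟨P, hherm, heq⟩ := Stmt13Aux.stein_exists hst' CN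
    have hPD := Stmt13Aux.stein_posdef hst'
      (Stmt13Aux.pbh_obs (mconj A₂ * A₂) CN hkerN) hherm heq
    refine ⟨P, ⟨hPD, heq⟩, ?_⟩
    rintro P' ⟨hPD', heq'⟩
    exact Stmt13Aux.stein_unique hst' heq' heq
  · -- unique PD solution of the doubled equation → stability
    rintro ⟨P, ⟨hPD, heq⟩, -⟩
    exact Stmt13Aux.stein_nec hkerN hPD heq
  · -- equivalence of the two equations under stability
    intro hst P₁ _
    have hst' : Stmt13Aux.Stab (mconj A₂ * A₂) := hst
    exact ⟨fun h => Stmt13Aux.e1_to_e2 A₂ C₂ h, fun h => Stmt13Aux.e2_to_e1 A₂ C₂ hst' h⟩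
end
end
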